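/- arXiv:0910.5426 — 4 statements merged into one kernel-verified Lean document; each statement's English description precedes it below -/
import Mathlib

section
/- (Repelling case, lower region.) Let R=[p1,q1]×[p2,q2], let f:[p1,q1]→[p2,q2] be a nondecreasing C¹ function with f(p1)=p2 and f(q1)=q2, and let c be a C¹ cost field with U≤0 a.e. on {(x,y)∈R: y>f(x)} and U≥0 a.e. on {(x,y)∈R: y<f(x)} (repelling configuration). Let a=(a1,a2), b=(b1,b2)∈R with a1≤b1, a2≤b2, a2≤f(a1) and b2≤f(b1) (both points on or below the graph of f). Then the horizontal-then-vertical two-segment path from a to b lies entirely in the closed lower region {(x,y)∈R: y≤f(x)}, and every monotone path γ from a to b satisfying γ2(t)≤f(γ1(t)) for all t (i.e., remaining in the closed lower region) has cost(γ) ≥ ∫_{a1}^{b1} c1(t,a2) dt + ∫_{a2}^{b2} c2(b1,s) ds, the cost of that two-segment path. -/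
open MeasureTheory Set Topology Filter


/-- A monotone path in the plane: a continuous, piecewise-C¹ map
`p : [0,1] → ℝ²` whose two coordinate derivatives (given by `d`, and valid
outside a finite exceptional set `exc`) are nonnegative. -/
structure MonoPath where
  p : ℝ → ℝ × ℝ
  d : ℝ → ℝ × ℝ
  exc : Set ℝ
  exc_finite : exc.Finite
  cont : ContinuousOn p (Icc 0 1)
  deriv_fst : ∀ t ∈ Icc (0:ℝ) 1 \ exc, HasDerivAt (fun u => (p u).1) (d t).1 t
  deriv_snd : ∀ t ∈ Icc (0:ℝ) 1 \ exc, HasDerivAt (fun u => (p u).2) (d t).2 t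
  d_fst_nonneg : ∀ t ∈ Icc (0:ℝ) 1, 0 ≤ (d t).1
  d_snd_nonneg : ∀ t ∈ Icc (0:ℝ) 1, 0 ≤ (d t).2

/-- The cost of a monotone path under the cost field `c = (c1, c2)`:
`∫₀¹ (c1(γ(t)) γ₁'(t) + c2(γ(t)) γ₂'(t)) dt`. -/
noncomputable def pathCost (c : ℝ × ℝ → ℝ × ℝ) (γ : MonoPath) : ℝ :=
  ∫ t in (0:ℝ)..1, ((c (γ.p t)).1 * (γ.d t).1 + (c (γ.p t)).2 * (γ.d t).2)

/-- `γ` is a monotone path from `a` to `b`, staying in the rectangle `[a₁,b₁]×[a₂,b₂]`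
(which is `Set.Icc a b` for the product order on `ℝ × ℝ`). -/
def IsMonoPathFromTo (γ : MonoPath) (a b : ℝ × ℝ) : Prop :=
  γ.p 0 = a ∧ γ.p 1 = b ∧ ∀ t ∈ Icc (0:ℝ) 1, γ.p t ∈ Icc a b

/-- `U(x) = ∂c1/∂x2 (x) − ∂c2/∂x1 (x)`. -/
noncomputable def Ucurl (c : ℝ × ℝ → ℝ × ℝ) (x : ℝ × ℝ) : ℝ :=
  deriv (fun y => (c (x.1, y)).1) x.2 - deriv (fun s => (c (s, x.2)).2) x.1

/-- Hypograph function of a monotone path: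
`h_γ(x) = sup { γ₂(t) : t ∈ [0,1], γ₁(t) ≤ x }`. -/
noncomputable def hypoFun (γ : MonoPath) (x : ℝ) : ℝ :=
  sSup ((fun t => (γ.p t).2) '' {t | t ∈ Icc (0:ℝ) 1 ∧ (γ.p t).1 ≤ x})

/-- Hypograph region of a monotone path from `a` to `b`:
`A_γ = {(x,y) : a₁ < x < b₁, a₂ < y < h_γ(x)}`. -/
def hypoRegion (γ : MonoPath) (a b : ℝ × ℝ) : Set (ℝ × ℝ) :=
  {q | a.1 < q.1 ∧ q.1 < b.1 ∧ a.2 < q.2 ∧ q.2 < hypoFun γ q.1}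


namespace R13

open intervalIntegral

/-- FTC-2 with a finite exceptional set. -/
lemma ftc_exc {E : Set ℝ} (hE : E.Finite) :
    ∀ (u v : ℝ), u ≤ v → ∀ φ φ' : ℝ → ℝ, ContinuousOn φ (Icc u v) →
      (∀ x ∈ Ioo u v \ E, HasDerivAt φ (φ' x) x) →
      IntervalIntegrable φ' volume u v →
      (∫ y in u..v, φ' y) = φ v - φ u := by
  refine Set.Finite.induction_on
    (motive := fun E _ => ∀ (u v : ℝ), u ≤ v → ∀ φ φ' : ℝ → ℝ, ContinuousOn φ (Icc u v) →
      (∀ x ∈ Ioo u v \ E, HasDerivAt φ (φ' x) x) →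
      IntervalIntegrable φ' volume u v →
      (∫ y in u..v, φ' y) = φ v - φ u) E hE ?_ ?_
  · intro u v huv φ φ' hcont hderiv hint
    exact integral_eq_sub_of_hasDerivAt_of_le huv hcont
      (fun x hx => hderiv x (by simpa using hx)) hint
  · intro x₀ s hx₀s hsfin IH u v huv φ φ' hcont hderiv hint
    by_cases hx : x₀ ∈ Ioo u v
    · have hsub1 : uIcc u x₀ ⊆ uIcc u v := by
        rw [uIcc_of_le huv, uIcc_of_le hx.1.le]
        exact Icc_subset_Icc le_rfl hx.2.le
      have hsub2 : uIcc x₀ v ⊆ uIcc u v := by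
        rw [uIcc_of_le huv, uIcc_of_le hx.2.le]
        exact Icc_subset_Icc hx.1.le le_rfl
      have hint1 : IntervalIntegrable φ' volume u x₀ := hint.mono_set hsub1
      have hint2 : IntervalIntegrable φ' volume x₀ v := hint.mono_set hsub2
      have h1 : (∫ y in u..x₀, φ' y) = φ x₀ - φ u := by
        refine IH u x₀ hx.1.le φ φ'
          (hcont.mono (Icc_subset_Icc le_rfl hx.2.le)) (fun z hz => hderiv z ?_) hint1
        refine ⟨⟨hz.1.1, hz.1.2.trans hx.2⟩, ?_⟩
        rintro (h | h)
        · exact absurd h (ne_of_lt hz.1.2)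
        · exact hz.2 h
      have h2 : (∫ y in x₀..v, φ' y) = φ v - φ x₀ := by
        refine IH x₀ v hx.2.le φ φ'
          (hcont.mono (Icc_subset_Icc hx.1.le le_rfl)) (fun z hz => hderiv z ?_) hint2
        refine ⟨⟨hx.1.trans hz.1.1, hz.1.2⟩, ?_⟩
        rintro (h | h)
        · exact absurd h (ne_of_gt hz.1.1)
        · exact hz.2 h
      rw [← integral_add_adjacent_intervals hint1 hint2, h1, h2]; ring
    · refine IH u v huv φ φ' hcont (fun z hz => hderiv z ⟨hz.1, ?_⟩) hint
      rintro (h | h)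
      · exact hx (h ▸ hz.1)
      · exact hz.2 h

/-- automatic interval-integrability of a nonnegative derivative, with finite
exceptional set. -/
lemma intervalIntegrable_exc {E : Set ℝ} (hE : E.Finite) :
    ∀ (u v : ℝ), u ≤ v → ∀ φ φ' : ℝ → ℝ, ContinuousOn φ (Icc u v) →
      (∀ x ∈ Ioo u v \ E, HasDerivAt φ (φ' x) x) →
      (∀ x ∈ Ioo u v, 0 ≤ φ' x) →
      IntervalIntegrable φ' volume u v := by
  refine Set.Finite.induction_on
    (motive := fun E _ => ∀ (u v : ℝ), u ≤ v → ∀ φ φ' : ℝ → ℝ, ContinuousOn φ (Icc u v) →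
      (∀ x ∈ Ioo u v \ E, HasDerivAt φ (φ' x) x) →
      (∀ x ∈ Ioo u v, 0 ≤ φ' x) →
      IntervalIntegrable φ' volume u v) E hE ?_ ?_
  · intro u v huv φ φ' hcont hderiv hpos
    refine intervalIntegrable_deriv_of_nonneg (g := φ) ?_ ?_ ?_
    · rwa [uIcc_of_le huv]
    · intro x hx; rw [min_eq_left huv, max_eq_right huv] at hx
      exact hderiv x (by simpa using hx)
    · intro x hx; rw [min_eq_left huv, max_eq_right huv] at hx
      exact hpos x hx
  · intro x₀ s hx₀s hsfin IH u v huv φ φ' hcont hderiv hpos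
    by_cases hx : x₀ ∈ Ioo u v
    · have h1 : IntervalIntegrable φ' volume u x₀ := by
        refine IH u x₀ hx.1.le φ φ'
          (hcont.mono (Icc_subset_Icc le_rfl hx.2.le)) (fun z hz => hderiv z ?_)
          (fun z hz => hpos z ⟨hz.1, hz.2.trans hx.2⟩)
        refine ⟨⟨hz.1.1, hz.1.2.trans hx.2⟩, ?_⟩
        rintro (h | h)
        · exact absurd h (ne_of_lt hz.1.2)
        · exact hz.2 h
      have h2 : IntervalIntegrable φ' volume x₀ v := by
        refine IH x₀ v hx.2.le φ φ'
          (hcont.mono (Icc_subset_Icc hx.1.le le_rfl)) (fun z hz => hderiv z ?_)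
          (fun z hz => hpos z ⟨hx.1.trans hz.1, hz.2⟩)
        refine ⟨⟨hx.1.trans hz.1.1, hz.1.2⟩, ?_⟩
        rintro (h | h)
        · exact absurd h (ne_of_gt hz.1.1)
        · exact hz.2 h
      exact h1.trans h2
    · refine IH u v huv φ φ' hcont (fun z hz => hderiv z ⟨hz.1, ?_⟩) hpos
      rintro (h | h)
      · exact hx (h ▸ hz.1)
      · exact hz.2 h

noncomputable def w1 (c : ℝ × ℝ → ℝ × ℝ) (q : ℝ × ℝ) : ℝ :=
  fderiv ℝ (fun p : ℝ × ℝ => (c p).1) q (0, 1)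

noncomputable def w2 (c : ℝ × ℝ → ℝ × ℝ) (q : ℝ × ℝ) : ℝ :=
  fderiv ℝ (fun p : ℝ × ℝ => (c p).2) q (1, 0)

variable {c : ℝ × ℝ → ℝ × ℝ}

lemma contDiff_c1 (hc : ContDiff ℝ 1 c) : ContDiff ℝ 1 (fun p : ℝ × ℝ => (c p).1) :=
  (ContinuousLinearMap.fst ℝ ℝ ℝ).contDiff.comp hc

lemma contDiff_c2 (hc : ContDiff ℝ 1 c) : ContDiff ℝ 1 (fun p : ℝ × ℝ => (c p).2) :=
  (ContinuousLinearMap.snd ℝ ℝ ℝ).contDiff.comp hc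

lemma hasDerivAt_w1 (hc : ContDiff ℝ 1 c) (x y : ℝ) :
    HasDerivAt (fun v => (c (x, v)).1) (w1 c (x, y)) y := by
  have he : HasDerivAt (fun v : ℝ => (x, v)) ((0 : ℝ), (1 : ℝ)) y :=
    (hasDerivAt_const y x).prodMk (hasDerivAt_id y)
  exact (((contDiff_c1 hc).differentiable one_ne_zero (x, y)).hasFDerivAt).comp_hasDerivAt y he

lemma hasDerivAt_w2 (hc : ContDiff ℝ 1 c) (x y : ℝ) :
    HasDerivAt (fun u => (c (u, y)).2) (w2 c (x, y)) x := by
  have he : HasDerivAt (fun u : ℝ => (u, y)) ((1 : ℝ), (0 : ℝ)) x :=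
    (hasDerivAt_id x).prodMk (hasDerivAt_const x y)
  exact (((contDiff_c2 hc).differentiable one_ne_zero (x, y)).hasFDerivAt).comp_hasDerivAt (l := fun p : ℝ × ℝ => (c p).2) x he

lemma cont_w1 (hc : ContDiff ℝ 1 c) : Continuous (w1 c) :=
  ((contDiff_c1 hc).continuous_fderiv one_ne_zero).clm_apply continuous_const

lemma cont_w2 (hc : ContDiff ℝ 1 c) : Continuous (w2 c) :=
  ((contDiff_c2 hc).continuous_fderiv one_ne_zero).clm_apply continuous_const

lemma Ucurl_eq (hc : ContDiff ℝ 1 c) (q : ℝ × ℝ) : Ucurl c q = w1 c q - w2 c q := by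
  have h1 : deriv (fun y => (c (q.1, y)).1) q.2 = w1 c q := (hasDerivAt_w1 hc q.1 q.2).deriv
  have h2 : deriv (fun s => (c (s, q.2)).2) q.1 = w2 c q := (hasDerivAt_w2 hc q.1 q.2).deriv
  rw [Ucurl, h1, h2]

lemma cont_Ucurl (hc : ContDiff ℝ 1 c) : Continuous (Ucurl c) := by
  have : Ucurl c = fun q => w1 c q - w2 c q := funext (Ucurl_eq hc)
  rw [this]; exact (cont_w1 hc).sub (cont_w2 hc)

lemma mem_uIcc_of_uIoc {α β s : ℝ} (hs : s ∈ Set.uIoc α β) : s ∈ uIcc α β := by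
  rw [Set.mem_uIoc] at hs
  rw [Set.mem_uIcc]
  rcases hs with h | h
  · exact Or.inl ⟨h.1.le, h.2⟩
  · exact Or.inr ⟨h.1.le, h.2⟩

lemma abs_sub_le_of_uIoc {α s β : ℝ} (hs : s ∈ Set.uIoc α β) : |s - α| ≤ |β - α| := by
  rw [Set.mem_uIoc] at hs
  rcases hs with h | h
  · rw [abs_of_nonneg (by linarith), abs_of_nonneg (by linarith)]; linarith
  · rw [abs_of_nonpos (by linarith), abs_of_nonpos (by linarith)]; linarith

/-- Differentiation under the interval integral, for a continuous integrand with
continuous partial derivative in the parameter. -/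
lemma hasDerivAt_param {k w : ℝ × ℝ → ℝ} (hk : Continuous k) (hw : Continuous w)
    (hkd : ∀ q : ℝ × ℝ, HasDerivAt (fun u => k (u, q.2)) (w q) q.1)
    (α β x0 : ℝ) :
    HasDerivAt (fun x => ∫ s in α..β, k (x, s)) (∫ s in α..β, w (x0, s)) x0 := by
  obtain ⟨M, hM⟩ : ∃ M, ∀ q ∈ Icc (x0 - 1) (x0 + 1) ×ˢ uIcc α β, ‖w q‖ ≤ M :=
    (isCompact_Icc.prod isCompact_uIcc).exists_bound_of_continuousOn hw.continuousOn
  refine (intervalIntegral.hasDerivAt_integral_of_dominated_loc_of_deriv_le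
    (F := fun x s => k (x, s)) (F' := fun x s => w (x, s)) (bound := fun _ => M)
    (Metric.ball_mem_nhds x0 zero_lt_one) ?_ ?_ ?_ ?_ ?_ ?_).2
  · exact Filter.Eventually.of_forall fun x =>
      (hk.comp (continuous_const.prodMk continuous_id)).aestronglyMeasurable
  · exact (hk.comp (continuous_const.prodMk continuous_id)).intervalIntegrable _ _
  · exact (hw.comp (continuous_const.prodMk continuous_id)).aestronglyMeasurable
  · refine Filter.Eventually.of_forall fun s hs x hx => hM (x, s) ⟨?_, mem_uIcc_of_uIoc hs⟩
    have := Metric.mem_ball.1 hx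
    rw [Real.dist_eq] at this
    have h1 := abs_sub_le_iff.1 this.le
    exact ⟨by linarith [h1.2], by linarith [h1.1]⟩
  · exact intervalIntegrable_const
  · exact Filter.Eventually.of_forall fun s _ x _ => hkd (x, s)

/-- Continuity of a parametric primitive. -/
lemma cont_primitive {k : ℝ × ℝ → ℝ} (hk : Continuous k) (α : ℝ) :
    Continuous fun q : ℝ × ℝ => ∫ s in α..q.2, k (q.1, s) :=
  continuous_parametric_primitive_of_continuous (f := fun x s => k (x, s)) (by exact hk)

/-- Full differentiability of a parametric primitive with moving endpoint. -/
lemma hasFDerivAt_primitive {k w : ℝ × ℝ → ℝ} (hk : Continuous k) (hw : Continuous w)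
    (hkd : ∀ q : ℝ × ℝ, HasDerivAt (fun u => k (u, q.2)) (w q) q.1) (α : ℝ) (q0 : ℝ × ℝ) :
    HasFDerivAt (fun q : ℝ × ℝ => ∫ s in α..q.2, k (q.1, s))
      ((∫ s in α..q0.2, w (q0.1, s)) • ContinuousLinearMap.fst ℝ ℝ ℝ
        + (k q0) • ContinuousLinearMap.snd ℝ ℝ ℝ) q0 := by
  obtain ⟨x0, y0⟩ := q0
  have hkcont : ∀ z : ℝ, Continuous fun s : ℝ => k (z, s) := fun z =>
    hk.comp (continuous_const.prodMk continuous_id)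
  have heq : (fun q : ℝ × ℝ => ∫ s in α..q.2, k (q.1, s))
      = fun q => (∫ s in α..y0, k (q.1, s)) + ∫ s in y0..q.2, k (q.1, s) := by
    funext q
    rw [integral_add_adjacent_intervals ((hkcont q.1).intervalIntegrable _ _)
      ((hkcont q.1).intervalIntegrable _ _)]
  rw [heq]
  refine HasFDerivAt.add ?_ ?_
  · exact (hasDerivAt_param hk hw hkd α y0 x0).comp_hasFDerivAt (x0, y0) (hasFDerivAt_fst (𝕜 := ℝ) (p := (x0, y0)))
  · -- moving endpoint part
    rw [hasFDerivAt_iff_isLittleO_nhds_zero]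
    rw [Asymptotics.isLittleO_iff]
    intro ε hε
    obtain ⟨δ, hδ, hδk⟩ := Metric.continuousAt_iff.1 hk.continuousAt ε hε
    have hmem : Metric.ball (0 : ℝ × ℝ) δ ∈ 𝓝 (0 : ℝ × ℝ) := Metric.ball_mem_nhds _ hδ
    filter_upwards [hmem] with v hv
    have hv2 : |v.2| < δ := by
      have := norm_snd_le v
      have hvn : ‖v‖ < δ := by simpa [Metric.mem_ball, dist_zero_right] using hv
      calc |v.2| = ‖v.2‖ := rfl
        _ ≤ ‖v‖ := norm_snd_le v
        _ < δ := hvn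
    have key : ((x0, y0) + v).2 = y0 + v.2 := rfl
    have hconst : (k (x0, y0)) * v.2 = ∫ s in y0..(y0 + v.2), k (x0, y0) := by
      rw [intervalIntegral.integral_const]; simp [smul_eq_mul]; ring
    have hintk : IntervalIntegrable (fun s => k ((x0 + v.1), s)) volume y0 (y0 + v.2) :=
      (hkcont (x0 + v.1)).intervalIntegrable _ _
    have hEq : (∫ s in y0..((x0, y0) + v).2, k (((x0, y0) + v).1, s)) - (∫ s in y0..y0, k (x0, s))
        - ((k (x0, y0)) • ContinuousLinearMap.snd ℝ ℝ ℝ) v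
        = ∫ s in y0..(y0 + v.2), (k ((x0 + v.1), s) - k (x0, y0)) := by
      rw [intervalIntegral.integral_sub hintk intervalIntegrable_const]
      simp only [intervalIntegral.integral_same, sub_zero, ContinuousLinearMap.smul_apply,
        ContinuousLinearMap.coe_snd', smul_eq_mul]
      rw [intervalIntegral.integral_const]
      have : ((x0, y0) + v).1 = x0 + v.1 := rfl
      rw [key, this]
      simp [smul_eq_mul]; ring
    rw [hEq]
    have hbound : ∀ s ∈ Set.uIoc y0 (y0 + v.2), ‖k ((x0 + v.1), s) - k (x0, y0)‖ ≤ ε := by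
      intro s hs
      have h2 : |s - y0| ≤ |v.2| := by simpa using abs_sub_le_of_uIoc hs
      have hdist : dist ((x0 + v.1), s) (x0, y0) < δ := by
        rw [Prod.dist_eq]
        refine max_lt ?_ ?_
        · rw [Real.dist_eq]
          simp only [add_sub_cancel_left]
          calc |v.1| = ‖v.1‖ := rfl
            _ ≤ ‖v‖ := norm_fst_le v
            _ < δ := by simpa [Metric.mem_ball, dist_zero_right] using hv
        · rw [Real.dist_eq]; exact lt_of_le_of_lt h2 hv2
      exact (le_of_lt (by simpa [Real.dist_eq] using hδk hdist))
    calc ‖∫ s in y0..(y0 + v.2), (k ((x0 + v.1), s) - k (x0, y0))‖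
        ≤ ε * |y0 + v.2 - y0| := intervalIntegral.norm_integral_le_of_norm_le_const hbound
      _ = ε * |v.2| := by ring_nf
      _ ≤ ε * ‖v‖ := by
          refine mul_le_mul_of_nonneg_left ?_ hε.le
          calc |v.2| = ‖v.2‖ := rfl
            _ ≤ ‖v‖ := norm_snd_le v

noncomputable def V (c : ℝ × ℝ → ℝ × ℝ) (α : ℝ) (q : ℝ × ℝ) : ℝ :=
  ∫ s in α..q.2, Ucurl c (q.1, s)

lemma cont_V (hc : ContDiff ℝ 1 c) (α : ℝ) : Continuous (V c α) :=
  cont_primitive (cont_Ucurl hc) α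

lemma V_eq (hc : ContDiff ℝ 1 c) (α x y : ℝ) :
    V c α (x, y) = (c (x, y)).1 - (c (x, α)).1 - ∫ s in α..y, w2 c (x, s) := by
  have hw1c : Continuous fun s => w1 c (x, s) :=
    (cont_w1 hc).comp (continuous_const.prodMk continuous_id)
  have hw2c : Continuous fun s => w2 c (x, s) :=
    (cont_w2 hc).comp (continuous_const.prodMk continuous_id)
  have hsplit : V c α (x, y) = (∫ s in α..y, w1 c (x, s)) - ∫ s in α..y, w2 c (x, s) := by
    have hfun : (fun s => Ucurl c (x, s)) = fun s => w1 c (x, s) - w2 c (x, s) :=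
      funext fun s => Ucurl_eq hc (x, s)
    rw [show V c α (x, y) = ∫ s in α..y, Ucurl c (x, s) from rfl, hfun,
      intervalIntegral.integral_sub (hw1c.intervalIntegrable _ _) (hw2c.intervalIntegrable _ _)]
  have hftc : (∫ s in α..y, w1 c (x, s)) = (c (x, y)).1 - (c (x, α)).1 :=
    intervalIntegral.integral_eq_sub_of_hasDerivAt (fun s _ => hasDerivAt_w1 hc x s)
      (hw1c.intervalIntegrable _ _)
  rw [hsplit, hftc]

lemma V_nonneg (hc : ContDiff ℝ 1 c) {p1 q1 p2 q2 α : ℝ}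
    {f : ℝ → ℝ} (hfc : ContinuousOn f (Icc p1 q1))
    (hfmaps : ∀ t ∈ Icc p1 q1, f t ∈ Icc p2 q2) (hα : α ∈ Icc p2 q2)
    (hUlow : ∀ᵐ q ∂(volume.restrict
      {q : ℝ × ℝ | q ∈ Icc p1 q1 ×ˢ Icc p2 q2 ∧ q.2 < f q.1}), 0 ≤ Ucurl c q)
    (hlt : p1 < q1) {x y : ℝ} (hx : x ∈ Icc p1 q1) (hy1 : α ≤ y) (hy2 : y ≤ f x) :
    0 ≤ V c α (x, y) := by
  set S : Set (ℝ × ℝ) := {q : ℝ × ℝ | q ∈ Icc p1 q1 ×ˢ Icc p2 q2 ∧ q.2 < f q.1} with hSdef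
  have hgcont : ContinuousOn (fun q : ℝ × ℝ => f q.1 - q.2) (Icc p1 q1 ×ˢ (univ : Set ℝ)) := by
    refine ContinuousOn.sub ?_ continuous_snd.continuousOn
    exact hfc.comp continuous_fst.continuousOn (fun q hq => hq.1)
  obtain ⟨u, hu_open, hu_eq⟩ := (continuousOn_iff'.1 hgcont) (Ioi 0) isOpen_Ioi
  have hS_eq : S = (Icc p1 q1 ×ˢ Icc p2 q2) ∩ u := by
    ext q
    constructor
    · rintro ⟨hq1, hq2⟩
      refine ⟨hq1, ?_⟩
      have hthis : q ∈ (fun q : ℝ × ℝ => f q.1 - q.2) ⁻¹' (Ioi 0) ∩ (Icc p1 q1 ×ˢ univ) :=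
        ⟨by simpa using sub_pos.2 hq2, ⟨hq1.1, trivial⟩⟩
      rw [hu_eq] at hthis; exact hthis.1
    · rintro ⟨hq1, hq2⟩
      refine ⟨hq1, ?_⟩
      have hthis : q ∈ u ∩ (Icc p1 q1 ×ˢ univ) := ⟨hq2, hq1.1, trivial⟩
      rw [← hu_eq] at hthis
      simpa [sub_pos] using hthis.1
  have hSmeas : MeasurableSet S := by
    rw [hS_eq]; exact (measurableSet_Icc.prod measurableSet_Icc).inter hu_open.measurableSet
  have hUmeas : MeasurableSet {q : ℝ × ℝ | Ucurl c q < 0} :=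
    (isOpen_lt (cont_Ucurl hc) continuous_const).measurableSet
  set N := {q : ℝ × ℝ | Ucurl c q < 0} ∩ S with hNdef
  have hNmeas : MeasurableSet N := hUmeas.inter hSmeas
  have hN0 : volume N = 0 := by
    have h := ae_iff.1 hUlow
    simp only [not_le] at h
    rwa [Measure.restrict_apply hUmeas] at h
  have hslice : ∀ᵐ x' ∂(volume : Measure ℝ), volume (Prod.mk x' ⁻¹' N) = 0 := by
    have h := (Measure.measure_prod_null (μ := (volume : Measure ℝ))
      (ν := (volume : Measure ℝ)) hNmeas).1 (by exact hN0)
    filter_upwards [h] with x' hx'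
    simpa using hx'
  have claim : ∀ x', volume (Prod.mk x' ⁻¹' N) = 0 → x' ∈ Icc p1 q1 → ∀ y',
      0 ≤ V c α (x', max α (min y' (f x'))) := by
    intro x' hx'0 hx'mem y'
    rcases le_or_gt (min y' (f x')) α with hle | hgt
    · rw [max_eq_left hle]
      rw [show V c α (x', α) = ∫ s in α..α, Ucurl c (x', s) from rfl,
        intervalIntegral.integral_same]
    · rw [max_eq_right hgt.le]
      set m := min y' (f x') with hmdef
      have hmle : m ≤ f x' := min_le_right _ _
      have hmq2 : m ≤ q2 := hmle.trans (hfmaps x' hx'mem).2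
      rw [show V c α (x', m) = ∫ s in α..m, Ucurl c (x', s) from rfl]
      refine intervalIntegral.integral_nonneg_of_ae_restrict hgt.le ?_
      have hbad : {s : ℝ | ¬ 0 ≤ Ucurl c (x', s)} ∩ Icc α m
          ⊆ (Prod.mk x' ⁻¹' N ∪ {α}) ∪ {f x'} := by
        intro s hs
        rcases eq_or_ne s α with rfl | hsα
        · exact Or.inl (Or.inr rfl)
        rcases eq_or_ne s (f x') with rfl | hsf
        · exact Or.inr rfl
        refine Or.inl (Or.inl ?_)
        have hneg : Ucurl c (x', s) < 0 := not_le.1 hs.1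
        have hs1 : α ≤ s := hs.2.1
        have hs2 : s ≤ m := hs.2.2
        exact ⟨hneg, ⟨⟨hx'mem, ⟨hα.1.trans hs1, hs2.trans hmq2⟩⟩,
          lt_of_le_of_ne (hs2.trans hmle) hsf⟩⟩
      have hbad0 : volume ({s : ℝ | ¬ 0 ≤ Ucurl c (x', s)} ∩ Icc α m) = 0 :=
        measure_mono_null hbad
          (measure_union_null (measure_union_null hx'0 (by simp)) (by simp))
      refine (ae_restrict_iff' measurableSet_Icc).2 ?_
      rw [ae_iff]
      refine measure_mono_null ?_ hbad0
      intro s hs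
      simp only [mem_setOf_eq, not_forall] at hs
      obtain ⟨hsm, hns⟩ := hs
      exact ⟨by simpa using hns, hsm⟩
  set G := {x' : ℝ | volume (Prod.mk x' ⁻¹' N) = 0} with hGdef
  have hGfull : volume {x' : ℝ | ¬ volume (Prod.mk x' ⁻¹' N) = 0} = 0 := ae_iff.1 hslice
  have hclos : x ∈ closure (G ∩ Icc p1 q1) := by
    by_contra hcon
    rw [mem_closure_iff] at hcon
    push_neg at hcon
    obtain ⟨o, ho_open, hxo, hdisj⟩ := hcon
    obtain ⟨ε, hε, hball⟩ := Metric.isOpen_iff.1 ho_open x hxo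
    obtain ⟨l, r, hlr, hsub⟩ : ∃ l r : ℝ, l < r ∧ Ioo l r ⊆ Icc p1 q1 ∩ Metric.ball x ε := by
      rcases lt_or_ge x q1 with hxq | hxq
      · refine ⟨x, min q1 (x + ε), lt_min hxq (by linarith), fun z hz => ?_⟩
        have hza : z < q1 := lt_of_lt_of_le hz.2 (min_le_left _ _)
        have hzb : z < x + ε := lt_of_lt_of_le hz.2 (min_le_right _ _)
        refine ⟨⟨hx.1.trans hz.1.le, hza.le⟩, ?_⟩
        rw [Metric.mem_ball, Real.dist_eq, abs_sub_lt_iff]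
        constructor <;> linarith [hz.1]
      · have hxq1 : x = q1 := le_antisymm hx.2 hxq
        refine ⟨max p1 (x - ε), x, max_lt (by rw [hxq1]; linarith) (by linarith), fun z hz => ?_⟩
        have hza : p1 < z := lt_of_le_of_lt (le_max_left _ _) hz.1
        have hzb : x - ε < z := lt_of_le_of_lt (le_max_right _ _) hz.1
        refine ⟨⟨hza.le, hz.2.le.trans (le_of_eq hxq1)⟩, ?_⟩
        rw [Metric.mem_ball, Real.dist_eq, abs_sub_lt_iff]
        constructor <;> linarith [hz.2]
    have hnull : volume (Ioo l r) = 0 := by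
      refine measure_mono_null (fun z hz => ?_) hGfull
      have hzi := hsub hz
      intro hzG
      exact (Set.not_nonempty_iff_eq_empty.2 hdisj) ⟨z, hball hzi.2, hzG, hzi.1⟩
    rw [Real.volume_Ioo] at hnull
    have := ENNReal.ofReal_eq_zero.1 hnull
    linarith
  obtain ⟨xs, hxs_mem, hxs_lim⟩ := mem_closure_iff_seq_limit.1 hclos
  have hxslim' : Tendsto (fun n => f (xs n)) atTop (𝓝 (f x)) := by
    have h1 : Tendsto xs atTop (𝓝[Icc p1 q1] x) :=
      tendsto_nhdsWithin_iff.2 ⟨hxs_lim, Filter.Eventually.of_forall fun n => (hxs_mem n).2⟩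
    exact ((hfc x hx).tendsto).comp h1
  have hylim : Tendsto (fun n => max α (min y (f (xs n)))) atTop (𝓝 y) := by
    have h2 : Tendsto (fun n => max α (min y (f (xs n)))) atTop
        (𝓝 (max α (min y (f x)))) :=
      tendsto_const_nhds.max (tendsto_const_nhds.min hxslim')
    rwa [min_eq_left hy2, max_eq_right hy1] at h2
  have hVlim : Tendsto (fun n => V c α (xs n, max α (min y (f (xs n))))) atTop
      (𝓝 (V c α (x, y))) := by
    have hpair : Tendsto (fun n => (xs n, max α (min y (f (xs n))))) atTop (𝓝 (x, y)) :=
      hxs_lim.prodMk_nhds hylim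
    exact ((cont_V hc α).continuousAt).tendsto.comp hpair
  refine ge_of_tendsto hVlim ?_
  exact Filter.Eventually.of_forall fun n => claim (xs n) (hxs_mem n).1 (hxs_mem n).2 y

end R13

/-- repelling configuration, both endpoints on or below the curve `f`:
the horizontal-then-vertical two-segment path stays in the closed lower region, and it is
optimal among monotone paths remaining in the closed lower region. -/
theorem repelling_lower (p1 q1 p2 q2 : ℝ) (hp1 : p1 ≤ q1) (hp2 : p2 ≤ q2)
    (f : ℝ → ℝ) (hf : ContDiffOn ℝ 1 f (Icc p1 q1)) (hfmono : MonotoneOn f (Icc p1 q1))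
    (hfmaps : ∀ t ∈ Icc p1 q1, f t ∈ Icc p2 q2) (hfp : f p1 = p2) (hfq : f q1 = q2)
    (c : ℝ × ℝ → ℝ × ℝ) (hc : ContDiff ℝ 1 c)
    (hUup : ∀ᵐ q ∂(volume.restrict
      {q : ℝ × ℝ | q ∈ Icc p1 q1 ×ˢ Icc p2 q2 ∧ f q.1 < q.2}), Ucurl c q ≤ 0)
    (hUlow : ∀ᵐ q ∂(volume.restrict
      {q : ℝ × ℝ | q ∈ Icc p1 q1 ×ˢ Icc p2 q2 ∧ q.2 < f q.1}), 0 ≤ Ucurl c q)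
    (a b : ℝ × ℝ) (ha : a ∈ Icc p1 q1 ×ˢ Icc p2 q2) (hb : b ∈ Icc p1 q1 ×ˢ Icc p2 q2)
    (hab1 : a.1 ≤ b.1) (hab2 : a.2 ≤ b.2)
    (halow : a.2 ≤ f a.1) (hblow : b.2 ≤ f b.1) :
    ((∀ x ∈ Icc a.1 b.1, a.2 ≤ f x) ∧ (∀ y ∈ Icc a.2 b.2, y ≤ f b.1)) ∧
      ∀ γ : MonoPath, IsMonoPathFromTo γ a b →
        (∀ t ∈ Icc (0:ℝ) 1, (γ.p t).2 ≤ f (γ.p t).1) →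
        (∫ t in a.1..b.1, (c (t, a.2)).1) + (∫ s in a.2..b.2, (c (b.1, s)).2) ≤
          pathCost c γ := by
  have haP : a.1 ∈ Icc p1 q1 ∧ a.2 ∈ Icc p2 q2 := ha
  have hbP : b.1 ∈ Icc p1 q1 ∧ b.2 ∈ Icc p2 q2 := hb
  constructor
  · constructor
    · intro x hx
      have hxm : x ∈ Icc p1 q1 := ⟨haP.1.1.trans hx.1, hx.2.trans hbP.1.2⟩
      exact halow.trans (hfmono haP.1 hxm hx.1)
    · intro y hy
      exact hy.2.trans hblow
  rintro γ ⟨hγ0, hγ1, hmem⟩ hbelow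
  have hcC : Continuous c := hc.continuous
  have hc1cont : Continuous fun q : ℝ × ℝ => (c q).1 := continuous_fst.comp hcC
  have hc2cont : Continuous fun q : ℝ × ℝ => (c q).2 := continuous_snd.comp hcC
  have hPc : ContinuousOn γ.p (Icc 0 1) := γ.cont
  have hP1c : ContinuousOn (fun t => (γ.p t).1) (Icc (0:ℝ) 1) :=
    continuous_fst.comp_continuousOn hPc
  have hP2c : ContinuousOn (fun t => (γ.p t).2) (Icc (0:ℝ) 1) :=
    continuous_snd.comp_continuousOn hPc
  have hmem' : ∀ t ∈ Icc (0:ℝ) 1, a.1 ≤ (γ.p t).1 ∧ (γ.p t).1 ≤ b.1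
      ∧ a.2 ≤ (γ.p t).2 ∧ (γ.p t).2 ≤ b.2 := by
    intro t ht
    have h := hmem t ht
    rw [mem_Icc, Prod.le_def, Prod.le_def] at h
    exact ⟨h.1.1, h.2.1, h.1.2, h.2.2⟩
  have hD : ∀ t ∈ Ioo (0:ℝ) 1 \ γ.exc, HasDerivAt γ.p (γ.d t) t := by
    intro t ht
    have ht' : t ∈ Icc (0:ℝ) 1 \ γ.exc := ⟨Ioo_subset_Icc_self ht.1, ht.2⟩
    exact (γ.deriv_fst t ht').prodMk (γ.deriv_snd t ht')
  -- integrand pieces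
  have hfc1 : Continuous fun u : ℝ => (c (u, a.2)).1 :=
    hc1cont.comp (continuous_id.prodMk continuous_const)
  have hfc2 : Continuous fun s : ℝ => (c (b.1, s)).2 :=
    hc2cont.comp (continuous_const.prodMk continuous_id)
  have hkcont : Continuous fun q : ℝ × ℝ => (c q).2 - (c (b.1, q.2)).2 :=
    hc2cont.sub (hc2cont.comp (continuous_const.prodMk continuous_snd))
  have hkd : ∀ q : ℝ × ℝ, HasDerivAt (fun u => (c (u, q.2)).2 - (c (b.1, q.2)).2)
      (R13.w2 c q) q.1 := fun q =>
    (R13.hasDerivAt_w2 hc q.1 q.2).sub_const ((c (b.1, q.2)).2)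
  -- derivative of the three potentials
  have hAderiv : ∀ t ∈ Ioo (0:ℝ) 1 \ γ.exc,
      HasDerivAt (fun t => ∫ u in a.1..(γ.p t).1, (c (u, a.2)).1)
        ((c ((γ.p t).1, a.2)).1 * (γ.d t).1) t := by
    intro t ht
    have hprim : HasDerivAt (fun x => ∫ u in a.1..x, (c (u, a.2)).1)
        ((c ((γ.p t).1, a.2)).1) ((γ.p t).1) :=
      intervalIntegral.integral_hasDerivAt_right (hfc1.intervalIntegrable _ _)
        (hfc1.stronglyMeasurableAtFilter _ _) hfc1.continuousAt
    exact hprim.comp t (γ.deriv_fst t ⟨Ioo_subset_Icc_self ht.1, ht.2⟩)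
  have hBderiv : ∀ t ∈ Ioo (0:ℝ) 1 \ γ.exc,
      HasDerivAt (fun t => ∫ s in a.2..(γ.p t).2, (c (b.1, s)).2)
        ((c (b.1, (γ.p t).2)).2 * (γ.d t).2) t := by
    intro t ht
    have hprim : HasDerivAt (fun x => ∫ s in a.2..x, (c (b.1, s)).2)
        ((c (b.1, (γ.p t).2)).2) ((γ.p t).2) :=
      intervalIntegral.integral_hasDerivAt_right (hfc2.intervalIntegrable _ _)
        (hfc2.stronglyMeasurableAtFilter _ _) hfc2.continuousAt
    exact hprim.comp t (γ.deriv_snd t ⟨Ioo_subset_Icc_self ht.1, ht.2⟩)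
  have hCderiv : ∀ t ∈ Ioo (0:ℝ) 1 \ γ.exc,
      HasDerivAt (fun t => ∫ s in a.2..(γ.p t).2, ((c ((γ.p t).1, s)).2 - (c (b.1, s)).2))
        ((∫ s in a.2..(γ.p t).2, R13.w2 c ((γ.p t).1, s)) * (γ.d t).1
          + ((c (γ.p t)).2 - (c (b.1, (γ.p t).2)).2) * (γ.d t).2) t := by
    intro t ht
    have hF := R13.hasFDerivAt_primitive (k := fun q : ℝ × ℝ => (c q).2 - (c (b.1, q.2)).2)
      (w := R13.w2 c) hkcont (R13.cont_w2 hc) hkd a.2 (γ.p t)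
    have hcomp := hF.comp_hasDerivAt t (hD t ht)
    refine hcomp.congr_deriv ?_
    simp only [ContinuousLinearMap.add_apply, ContinuousLinearMap.smul_apply,
      ContinuousLinearMap.coe_fst', ContinuousLinearMap.coe_snd', smul_eq_mul]
  have hφderiv : ∀ t ∈ Ioo (0:ℝ) 1 \ γ.exc,
      HasDerivAt (fun t => (∫ u in a.1..(γ.p t).1, (c (u, a.2)).1)
          + (∫ s in a.2..(γ.p t).2, (c (b.1, s)).2)
          + ∫ s in a.2..(γ.p t).2, ((c ((γ.p t).1, s)).2 - (c (b.1, s)).2))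
        ((c ((γ.p t).1, a.2)).1 * (γ.d t).1 + (c (b.1, (γ.p t).2)).2 * (γ.d t).2
          + ((∫ s in a.2..(γ.p t).2, R13.w2 c ((γ.p t).1, s)) * (γ.d t).1
            + ((c (γ.p t)).2 - (c (b.1, (γ.p t).2)).2) * (γ.d t).2)) t :=
    fun t ht => ((hAderiv t ht).add (hBderiv t ht)).add (hCderiv t ht)
  -- continuity of the potential
  have hφcont : ContinuousOn (fun t => (∫ u in a.1..(γ.p t).1, (c (u, a.2)).1)
      + (∫ s in a.2..(γ.p t).2, (c (b.1, s)).2)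
      + ∫ s in a.2..(γ.p t).2, ((c ((γ.p t).1, s)).2 - (c (b.1, s)).2)) (Icc (0:ℝ) 1) := by
    refine ContinuousOn.add (ContinuousOn.add ?_ ?_) ?_
    · exact (intervalIntegral.continuous_primitive
        (fun _ _ => hfc1.intervalIntegrable _ _) a.1).comp_continuousOn hP1c
    · exact (intervalIntegral.continuous_primitive
        (fun _ _ => hfc2.intervalIntegrable _ _) a.2).comp_continuousOn hP2c
    · exact (R13.cont_primitive hkcont a.2).comp_continuousOn hPc
  -- integrability
  have hD1int : IntervalIntegrable (fun t => (γ.d t).1) volume 0 1 :=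
    R13.intervalIntegrable_exc γ.exc_finite 0 1 zero_le_one (fun t => (γ.p t).1)
      (fun t => (γ.d t).1) hP1c
      (fun t ht => γ.deriv_fst t ⟨Ioo_subset_Icc_self ht.1, ht.2⟩)
      (fun t ht => γ.d_fst_nonneg t (Ioo_subset_Icc_self ht))
  have hD2int : IntervalIntegrable (fun t => (γ.d t).2) volume 0 1 :=
    R13.intervalIntegrable_exc γ.exc_finite 0 1 zero_le_one (fun t => (γ.p t).2)
      (fun t => (γ.d t).2) hP2c
      (fun t ht => γ.deriv_snd t ⟨Ioo_subset_Icc_self ht.1, ht.2⟩)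
      (fun t ht => γ.d_snd_nonneg t (Ioo_subset_Icc_self ht))
  have hIcc01 : uIcc (0:ℝ) 1 = Icc (0:ℝ) 1 := uIcc_of_le zero_le_one
  have hcont_c1γ : ContinuousOn (fun t => (c (γ.p t)).1) (uIcc (0:ℝ) 1) := by
    rw [hIcc01]; exact hc1cont.comp_continuousOn hPc
  have hcont_c2γ : ContinuousOn (fun t => (c (γ.p t)).2) (uIcc (0:ℝ) 1) := by
    rw [hIcc01]; exact hc2cont.comp_continuousOn hPc
  have hcont1 : ContinuousOn (fun t => (c ((γ.p t).1, a.2)).1) (uIcc (0:ℝ) 1) := by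
    rw [hIcc01]; exact hfc1.comp_continuousOn hP1c
  have hcont2 : ContinuousOn (fun t => (c (b.1, (γ.p t).2)).2) (uIcc (0:ℝ) 1) := by
    rw [hIcc01]; exact hfc2.comp_continuousOn hP2c
  have hcont3 : ContinuousOn (fun t => ∫ s in a.2..(γ.p t).2, R13.w2 c ((γ.p t).1, s))
      (uIcc (0:ℝ) 1) := by
    rw [hIcc01]; exact (R13.cont_primitive (R13.cont_w2 hc) a.2).comp_continuousOn hPc
  have hg_int : IntervalIntegrable
      (fun t => (c (γ.p t)).1 * (γ.d t).1 + (c (γ.p t)).2 * (γ.d t).2) volume 0 1 :=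
    (hD1int.continuousOn_mul hcont_c1γ).add (hD2int.continuousOn_mul hcont_c2γ)
  have hh_int : IntervalIntegrable
      (fun t => (c ((γ.p t).1, a.2)).1 * (γ.d t).1 + (c (b.1, (γ.p t).2)).2 * (γ.d t).2
        + ((∫ s in a.2..(γ.p t).2, R13.w2 c ((γ.p t).1, s)) * (γ.d t).1
          + ((c (γ.p t)).2 - (c (b.1, (γ.p t).2)).2) * (γ.d t).2)) volume 0 1 :=
    ((hD1int.continuousOn_mul hcont1).add (hD2int.continuousOn_mul hcont2)).add
      ((hD1int.continuousOn_mul hcont3).add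
        (hD2int.continuousOn_mul (hcont_c2γ.sub hcont2)))
  -- fundamental theorem of calculus
  have hFTC := R13.ftc_exc γ.exc_finite 0 1 zero_le_one _ _ hφcont hφderiv hh_int
  have hval : ((∫ u in a.1..(γ.p 1).1, (c (u, a.2)).1)
        + (∫ s in a.2..(γ.p 1).2, (c (b.1, s)).2)
        + ∫ s in a.2..(γ.p 1).2, ((c ((γ.p 1).1, s)).2 - (c (b.1, s)).2))
      - ((∫ u in a.1..(γ.p 0).1, (c (u, a.2)).1)
        + (∫ s in a.2..(γ.p 0).2, (c (b.1, s)).2)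
        + ∫ s in a.2..(γ.p 0).2, ((c ((γ.p 0).1, s)).2 - (c (b.1, s)).2))
      = (∫ t in a.1..b.1, (c (t, a.2)).1) + (∫ s in a.2..b.2, (c (b.1, s)).2) := by
    rw [hγ0, hγ1]
    simp [intervalIntegral.integral_same, sub_self]
  -- pointwise comparison
  have hZnull : volume (γ.exc ∪ ({0, 1} : Set ℝ)) = 0 :=
    measure_union_null (γ.exc_finite.measure_zero volume)
      (((Set.finite_singleton (1:ℝ)).insert 0).measure_zero volume)
  have hZae : ∀ᵐ t ∂volume.restrict (Icc (0:ℝ) 1), t ∉ γ.exc ∪ ({0, 1} : Set ℝ) := by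
    refine ae_restrict_of_ae ?_
    rw [ae_iff]
    refine measure_mono_null ?_ hZnull
    intro t ht
    simp only [mem_setOf_eq, not_not] at ht
    exact ht
  have hae : ∀ᵐ t ∂volume.restrict (Icc (0:ℝ) 1),
      (fun t => (c ((γ.p t).1, a.2)).1 * (γ.d t).1 + (c (b.1, (γ.p t).2)).2 * (γ.d t).2
        + ((∫ s in a.2..(γ.p t).2, R13.w2 c ((γ.p t).1, s)) * (γ.d t).1
          + ((c (γ.p t)).2 - (c (b.1, (γ.p t).2)).2) * (γ.d t).2)) t
      ≤ (fun t => (c (γ.p t)).1 * (γ.d t).1 + (c (γ.p t)).2 * (γ.d t).2) t := by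
    filter_upwards [hZae, ae_restrict_mem measurableSet_Icc] with t htZ htI
    have htO : t ∈ Ioo (0:ℝ) 1 \ γ.exc := by
      simp only [mem_union, mem_insert_iff, mem_singleton_iff, not_or] at htZ
      exact ⟨⟨lt_of_le_of_ne htI.1 (Ne.symm htZ.2.1), lt_of_le_of_ne htI.2 htZ.2.2⟩, htZ.1⟩
    have hVkey : 0 ≤ (γ.d t).1 * R13.V c a.2 (γ.p t) := by
      rcases eq_or_lt_of_le hp1 with hpq | hpq
      · -- degenerate rectangle: horizontal derivative vanishes
        have hba : b.1 ≤ a.1 := hbP.1.2.trans (hpq ▸ haP.1.1)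
        have hconst : ∀ u ∈ Ioo (0:ℝ) 1, (γ.p u).1 = a.1 := by
          intro u hu
          have h := hmem' u (Ioo_subset_Icc_self hu)
          linarith [h.1, h.2.1]
        have hd0 : HasDerivAt (fun _ : ℝ => a.1) ((γ.d t).1) t := by
          refine (γ.deriv_fst t ⟨Ioo_subset_Icc_self htO.1, htO.2⟩).congr_of_eventuallyEq ?_
          filter_upwards [Ioo_mem_nhds htO.1.1 htO.1.2] with u hu
          exact (hconst u hu).symm
        have hzero : (γ.d t).1 = 0 := hd0.unique (hasDerivAt_const t a.1)
        rw [hzero, zero_mul]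
      · refine mul_nonneg (γ.d_fst_nonneg t htI) ?_
        have hq := hmem' t htI
        have hx1 : (γ.p t).1 ∈ Icc p1 q1 := ⟨haP.1.1.trans hq.1, hq.2.1.trans hbP.1.2⟩
        exact R13.V_nonneg hc hf.continuousOn hfmaps haP.2 hUlow hpq hx1 hq.2.2.1
          (hbelow t htI)
    have hexp : R13.V c a.2 (γ.p t) = (c (γ.p t)).1 - (c ((γ.p t).1, a.2)).1
        - ∫ s in a.2..(γ.p t).2, R13.w2 c ((γ.p t).1, s) :=
      R13.V_eq hc a.2 (γ.p t).1 (γ.p t).2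
    have hkey2 : (γ.d t).1 * R13.V c a.2 (γ.p t)
        = (c (γ.p t)).1 * (γ.d t).1 - (c ((γ.p t).1, a.2)).1 * (γ.d t).1
          - (∫ s in a.2..(γ.p t).2, R13.w2 c ((γ.p t).1, s)) * (γ.d t).1 := by
      rw [hexp]; ring
    linarith [hVkey, hkey2]
  refine le_trans (le_of_eq (hFTC.trans hval).symm) ?_
  exact intervalIntegral.integral_mono_ae_restrict zero_le_one hh_int hg_int hae
end

section
/- (Karush–Kuhn–Tucker sufficiency for the global routing problem.) Let Ω=(0,α)×(0,β) be an open rectangle with closure Ω̄ and boundary ∂Ω, let ρ:Ω̄→ℝ be continuous, and let g:Ω̄×ℝ²→ℝ be continuous with g(x,·) convex and differentiable for each x. Suppose T* is a feasible flow and ζ:Ω̄→ℝ is C¹ with ζ=0 on ∂Ω such that for every x∈Ω and i=1,2: ∂g/∂T_i(x,T*(x)) + ∂ζ/∂x_i(x) ≥ 0, with equality whenever T*_i(x)>0. Then for every feasible flow T one has ∫_Ω g(x,T*(x)) dx ≤ ∫_Ω g(x,T(x)) dx; i.e., T* minimizes the global transportation cost among feasible flows. -/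
open MeasureTheory Set

lemma slice1_hasDerivAt {F : Type*} [NormedAddCommGroup F] [NormedSpace ℝ F]
    {f : ℝ × ℝ → F} {L : ℝ × ℝ →L[ℝ] F} {x : ℝ × ℝ} (h : HasFDerivAt f L x) :
    HasDerivAt (fun s => f (s, x.2)) (L (1, 0)) x.1 := by
  have h2 : HasDerivAt (fun s : ℝ => (s, x.2)) ((1:ℝ), (0:ℝ)) x.1 :=
    (hasDerivAt_id x.1).prodMk (hasDerivAt_const x.1 x.2)
  exact h.comp_hasDerivAt x.1 h2

lemma slice2_hasDerivAt {F : Type*} [NormedAddCommGroup F] [NormedSpace ℝ F]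
    {f : ℝ × ℝ → F} {L : ℝ × ℝ →L[ℝ] F} {x : ℝ × ℝ} (h : HasFDerivAt f L x) :
    HasDerivAt (fun s => f (x.1, s)) (L (0, 1)) x.2 := by
  have h2 : HasDerivAt (fun s : ℝ => (x.1, s)) ((0:ℝ), (1:ℝ)) x.2 :=
    (hasDerivAt_const x.2 x.1).prodMk (hasDerivAt_id x.2)
  exact h.comp_hasDerivAt x.2 h2

lemma clm_decomp (L : ℝ × ℝ →L[ℝ] ℝ) (a b : ℝ) : L (a, b) = a * L (1, 0) + b * L (0, 1) := by
  have h : ((a, b) : ℝ × ℝ) = a • ((1:ℝ), (0:ℝ)) + b • ((0:ℝ), (1:ℝ)) := by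
    simp [Prod.ext_iff]
  rw [h, map_add, L.map_smul, L.map_smul, smul_eq_mul, smul_eq_mul]

lemma convex_gradient_ineq {f : ℝ × ℝ → ℝ} (hf : ConvexOn ℝ univ f)
    {v u : ℝ × ℝ} {L : ℝ × ℝ →L[ℝ] ℝ} (hd : HasFDerivAt f L v) :
    f v + L (u - v) ≤ f u := by
  set φ : ℝ → ℝ := fun t => f (v + t • (u - v)) with hφdef
  have hφ : HasDerivAt φ (L (u - v)) 0 := by
    have h1 : HasDerivAt (fun t : ℝ => v + t • (u - v)) (u - v) 0 := by
      simpa using ((hasDerivAt_id (0:ℝ)).smul_const (u - v)).const_add v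
    have hd' : HasFDerivAt f L ((fun t : ℝ => v + t • (u - v)) 0) := by simpa using hd
    exact hd'.comp_hasDerivAt 0 h1
  rw [hasDerivAt_iff_tendsto_slope] at hφ
  have hφ' : Filter.Tendsto (slope φ 0) (nhdsWithin 0 (Ioi 0)) (nhds (L (u - v))) :=
    hφ.mono_left (nhdsWithin_mono _ (fun t ht => ne_of_gt ht))
  have key : ∀ᶠ t in nhdsWithin (0:ℝ) (Ioi 0), slope φ 0 t ≤ f u - f v := by
    filter_upwards [Ioc_mem_nhdsGT_of_mem (by norm_num : (0:ℝ) ∈ Ico (0:ℝ) 1)] with t ht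
    have h0 : (0:ℝ) < t := ht.1
    have h1 : t ≤ 1 := ht.2
    have hc := hf.2 (mem_univ v) (mem_univ u) (by linarith : (0:ℝ) ≤ 1 - t) h0.le (by ring)
    have heq : v + t • (u - v) = (1 - t) • v + t • u := by
      rw [smul_sub, sub_smul, one_smul]; abel
    have hφt : φ t ≤ (1 - t) * f v + t * f u := by
      rw [hφdef]; simpa [heq] using hc
    have hφ0 : φ 0 = f v := by simp [hφdef]
    rw [slope_def_field, sub_zero, div_le_iff₀ h0, hφ0]
    nlinarith [hφt]
  have hle := le_of_tendsto hφ' key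
  linarith


/-- Divergence of a planar vector field `T = (T1, T2)`:
`∇·T = ∂T1/∂x1 + ∂T2/∂x2`. -/
noncomputable def pdiv (T : ℝ × ℝ → ℝ × ℝ) (x : ℝ × ℝ) : ℝ :=
  deriv (fun s => (T (s, x.2)).1) x.1 + deriv (fun s => (T (x.1, s)).2) x.2

/-- A feasible flow on the closed rectangle `Ω̄ = [0,α]×[0,β]`: a C¹ vector field with
nonnegative components satisfying the conservation constraint `∇·T = ρ` on the open
rectangle `Ω = (0,α)×(0,β)`. -/
def FeasibleFlow (α β : ℝ) (ρ : ℝ × ℝ → ℝ) (T : ℝ × ℝ → ℝ × ℝ) : Prop :=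
  ContDiffOn ℝ 1 T (Icc 0 α ×ˢ Icc 0 β) ∧
  (∀ x ∈ Icc 0 α ×ˢ Icc 0 β, 0 ≤ (T x).1 ∧ 0 ≤ (T x).2) ∧
  (∀ x ∈ Ioo 0 α ×ˢ Ioo 0 β, pdiv T x = ρ x)

set_option maxHeartbeats 1000000 in
/-- Karush–Kuhn–Tucker sufficiency for the global routing problem: a feasible
flow `T*` admitting a C¹ multiplier `ζ` vanishing on the boundary and satisfying the KKT
complementarity conditions minimizes the global transportation cost among feasible flows. -/
theorem kkt_sufficiency (α β : ℝ) (hα : 0 < α) (hβ : 0 < β)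
    (ρ : ℝ × ℝ → ℝ) (hρ : ContinuousOn ρ (Icc 0 α ×ˢ Icc 0 β))
    (g : ℝ × ℝ → ℝ × ℝ → ℝ)
    (hgcont : ContinuousOn (fun q : (ℝ × ℝ) × (ℝ × ℝ) => g q.1 q.2)
      ((Icc 0 α ×ˢ Icc 0 β) ×ˢ (univ : Set (ℝ × ℝ))))
    (hgconv : ∀ x ∈ Icc 0 α ×ˢ Icc 0 β, ConvexOn ℝ univ (g x))
    (hgdiff : ∀ x ∈ Icc 0 α ×ˢ Icc 0 β, Differentiable ℝ (g x))
    (Tstar : ℝ × ℝ → ℝ × ℝ) (hTstar : FeasibleFlow α β ρ Tstar)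
    (ζ : ℝ × ℝ → ℝ) (hζ : ContDiffOn ℝ 1 ζ (Icc 0 α ×ˢ Icc 0 β))
    (hζbd : ∀ x ∈ (Icc 0 α ×ˢ Icc 0 β) \ (Ioo 0 α ×ˢ Ioo 0 β), ζ x = 0)
    (hkkt1 : ∀ x ∈ Ioo 0 α ×ˢ Ioo 0 β,
      0 ≤ deriv (fun s => g x (s, (Tstar x).2)) (Tstar x).1 +
            deriv (fun s => ζ (s, x.2)) x.1 ∧
      (0 < (Tstar x).1 →
        deriv (fun s => g x (s, (Tstar x).2)) (Tstar x).1 +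
          deriv (fun s => ζ (s, x.2)) x.1 = 0))
    (hkkt2 : ∀ x ∈ Ioo 0 α ×ˢ Ioo 0 β,
      0 ≤ deriv (fun s => g x ((Tstar x).1, s)) (Tstar x).2 +
            deriv (fun s => ζ (x.1, s)) x.2 ∧
      (0 < (Tstar x).2 →
        deriv (fun s => g x ((Tstar x).1, s)) (Tstar x).2 +
          deriv (fun s => ζ (x.1, s)) x.2 = 0)) :
    ∀ T : ℝ × ℝ → ℝ × ℝ, FeasibleFlow α β ρ T →
      (∫ x in Ioo 0 α ×ˢ Ioo 0 β, g x (Tstar x)) ≤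
        ∫ x in Ioo 0 α ×ˢ Ioo 0 β, g x (T x) := by
  intro T hT
  set Q : Set (ℝ × ℝ) := Icc 0 α ×ˢ Icc 0 β with hQdef
  set Ω : Set (ℝ × ℝ) := Ioo 0 α ×ˢ Ioo 0 β with hΩdef
  have hΩQ : Ω ⊆ Q := prod_mono Ioo_subset_Icc_self Ioo_subset_Icc_self
  have hQU : UniqueDiffOn ℝ Q := (uniqueDiffOn_Icc hα).prod (uniqueDiffOn_Icc hβ)
  have hΩint : Ω = interior Q := by
    rw [hQdef, hΩdef, interior_prod_eq, interior_Icc, interior_Icc]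
  have hQnx : ∀ x ∈ Ω, Q ∈ nhds x := by
    intro x hx
    rw [hΩint] at hx
    exact mem_interior_iff_mem_nhds.mp hx
  -- the difference field
  set W : ℝ × ℝ → ℝ × ℝ := fun y => T y - Tstar y with hWdef
  have hWcd : ContDiffOn ℝ 1 W Q := hT.1.sub hTstar.1
  -- fderivWithin-based derivatives (continuous on Q)
  set DW : ℝ × ℝ → (ℝ × ℝ) →L[ℝ] (ℝ × ℝ) := fun x => fderivWithin ℝ W Q x with hDWdef
  set Dz : ℝ × ℝ → (ℝ × ℝ) →L[ℝ] ℝ := fun x => fderivWithin ℝ ζ Q x with hDzdef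
  have hDWc : ContinuousOn DW Q := hWcd.continuousOn_fderivWithin hQU le_rfl
  have hDzc : ContinuousOn Dz Q := hζ.continuousOn_fderivWithin hQU le_rfl
  have hζc : ContinuousOn ζ Q := hζ.continuousOn
  have hWc : ContinuousOn W Q := hWcd.continuousOn
  -- fderivWithin is a true derivative at interior points
  have hWd : ∀ x ∈ Ω, HasFDerivAt W (DW x) x := by
    intro x hx
    have h1 : DifferentiableAt ℝ W x :=
      ((hWcd.differentiableOn one_ne_zero) x (hΩQ hx)).differentiableAt (hQnx x hx)
    have h2 : DW x = fderiv ℝ W x := fderivWithin_of_mem_nhds (hQnx x hx)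
    rw [h2]; exact h1.hasFDerivAt
  have hζd : ∀ x ∈ Ω, HasFDerivAt ζ (Dz x) x := by
    intro x hx
    have h1 : DifferentiableAt ℝ ζ x :=
      ((hζ.differentiableOn one_ne_zero) x (hΩQ hx)).differentiableAt (hQnx x hx)
    have h2 : Dz x = fderiv ℝ ζ x := fderivWithin_of_mem_nhds (hQnx x hx)
    rw [h2]; exact h1.hasFDerivAt
  -- the integrand of the divergence theorem
  set h : ℝ × ℝ → ℝ := fun x =>
    ζ x * ((DW x (1, 0)).1 + (DW x (0, 1)).2) + ((W x).1 * (Dz x (1, 0)) + (W x).2 * (Dz x (0, 1)))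
    with hhdef
  have hhc : ContinuousOn h Q := by
    apply ContinuousOn.add
    · apply hζc.mul
      apply ContinuousOn.add
      · exact (hDWc.clm_apply continuousOn_const).fst
      · exact (hDWc.clm_apply continuousOn_const).snd
    · apply ContinuousOn.add
      · exact (continuous_fst.comp_continuousOn hWc).mul (hDzc.clm_apply continuousOn_const)
      · exact (continuous_snd.comp_continuousOn hWc).mul (hDzc.clm_apply continuousOn_const)
  have hQcompact : IsCompact Q := (isCompact_Icc).prod isCompact_Icc
  have hQmeas : MeasurableSet Q := (measurableSet_Icc.prod measurableSet_Icc)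
  have hΩmeas : MeasurableSet Ω := (measurableSet_Ioo.prod measurableSet_Ioo)
  -- a.e. equality of Ω and Q
  have haeq : Ω =ᵐ[volume] Q := by
    rw [MeasureTheory.ae_eq_set]
    constructor
    · rw [diff_eq_empty.mpr hΩQ]; exact measure_empty
    · have hsub : Q \ Ω ⊆ (({0, α} : Set ℝ) ×ˢ (univ : Set ℝ)) ∪
          ((univ : Set ℝ) ×ˢ ({0, β} : Set ℝ)) := by
        rintro ⟨x1, x2⟩ ⟨⟨hx1, hx2⟩, hnot⟩
        simp only [hΩdef, mem_prod, mem_Ioo, not_and_or, not_and, not_lt] at hnot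
        simp only [hQdef, mem_Icc] at hx1 hx2
        rcases hnot with h1 | h2
        · rcases h1 with h | h
          · left; exact ⟨by left; exact le_antisymm h hx1.1, trivial⟩
          · left; exact ⟨by right; exact le_antisymm hx1.2 h, trivial⟩
        · rcases h2 with h | h
          · right; exact ⟨trivial, by left; exact le_antisymm h hx2.1⟩
          · right; exact ⟨trivial, by right; exact le_antisymm hx2.2 h⟩
      refine measure_mono_null hsub (measure_union_null ?_ ?_)
      · rw [Measure.volume_eq_prod, Measure.prod_prod,
          Set.Finite.measure_zero (by simp : ({0, α} : Set ℝ).Finite) volume, zero_mul]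
      · rw [Measure.volume_eq_prod, Measure.prod_prod,
          Set.Finite.measure_zero (by simp : ({0, β} : Set ℝ).Finite) volume, mul_zero]
  have hζ0 : ∀ x ∈ Q \ Ω, ζ x = 0 := hζbd
  -- divergence theorem: the integral of h over Q is zero
  have hdiv0 : (∫ x in Q, h x) = 0 := by
    set f1 : ℝ × ℝ → ℝ := fun x => ζ x * (W x).1 with hf1def
    set f2 : ℝ × ℝ → ℝ := fun x => ζ x * (W x).2 with hf2def
    set F1 : ℝ × ℝ → (ℝ × ℝ) →L[ℝ] ℝ := fun x =>
      ζ x • ((ContinuousLinearMap.fst ℝ ℝ ℝ).comp (DW x)) + (W x).1 • Dz x with hF1def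
    set F2 : ℝ × ℝ → (ℝ × ℝ) →L[ℝ] ℝ := fun x =>
      ζ x • ((ContinuousLinearMap.snd ℝ ℝ ℝ).comp (DW x)) + (W x).2 • Dz x with hF2def
    have happ : ∀ x, F1 x (1, 0) + F2 x (0, 1) = h x := by
      intro x
      simp only [hF1def, hF2def, hhdef, ContinuousLinearMap.add_apply,
        ContinuousLinearMap.coe_smul', Pi.smul_apply, ContinuousLinearMap.coe_comp',
        Function.comp_apply, ContinuousLinearMap.coe_fst', ContinuousLinearMap.coe_snd',
        smul_eq_mul]
      ring
    have hIcc : Icc ((0:ℝ), (0:ℝ)) (α, β) = Q := by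
      rw [Icc_prod_eq, hQdef]
    have hle : ((0:ℝ), (0:ℝ)) ≤ (α, β) := Prod.mk_le_mk.mpr ⟨hα.le, hβ.le⟩
    have hWc1 : ContinuousOn (fun x => (W x).1) Q := continuous_fst.comp_continuousOn hWc
    have hWc2 : ContinuousOn (fun x => (W x).2) Q := continuous_snd.comp_continuousOn hWc
    have Hcf : ContinuousOn f1 (Icc ((0:ℝ), (0:ℝ)) (α, β)) := by rw [hIcc]; exact hζc.mul hWc1
    have Hcg : ContinuousOn f2 (Icc ((0:ℝ), (0:ℝ)) (α, β)) := by rw [hIcc]; exact hζc.mul hWc2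
    have Hdf : ∀ x ∈ (Ioo ((0:ℝ), (0:ℝ)).1 (α, β).1 ×ˢ Ioo ((0:ℝ), (0:ℝ)).2 (α, β).2) \ (∅ : Set (ℝ × ℝ)), HasFDerivAt f1 (F1 x) x := by
      intro x hx
      have hx' : x ∈ Ω := hx.1
      exact (hζd x hx').mul ((hWd x hx').fst)
    have Hdg : ∀ x ∈ (Ioo ((0:ℝ), (0:ℝ)).1 (α, β).1 ×ˢ Ioo ((0:ℝ), (0:ℝ)).2 (α, β).2) \ (∅ : Set (ℝ × ℝ)), HasFDerivAt f2 (F2 x) x := by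
      intro x hx
      have hx' : x ∈ Ω := hx.1
      exact (hζd x hx').mul ((hWd x hx').snd)
    have Hi : IntegrableOn (fun x => F1 x (1, 0) + F2 x (0, 1))
        (Icc ((0:ℝ), (0:ℝ)) (α, β)) := by
      rw [hIcc]
      simp only [happ]
      exact hhc.integrableOn_compact hQcompact
    have hb := integral_divergence_prod_Icc_of_hasFDerivAt_off_countable_of_le
      f1 f2 F1 F2 ((0:ℝ), (0:ℝ)) (α, β) hle ∅ countable_empty Hcf Hcg Hdf Hdg Hi
    have hz2β : (∫ x in (0:ℝ)..α, f2 (x, β)) = 0 := by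
      have he : EqOn (fun s : ℝ => f2 (s, β)) (fun _ => (0:ℝ)) (uIcc 0 α) := by
        intro s hs
        rw [uIcc_of_le hα.le] at hs
        have hmem : ((s, β) : ℝ × ℝ) ∈ Q \ Ω :=
          ⟨⟨hs, right_mem_Icc.mpr hβ.le⟩, by simp [hΩdef]⟩
        simp [hf2def, hζ0 _ hmem]
      rw [intervalIntegral.integral_congr he, intervalIntegral.integral_zero]
    have hz20 : (∫ x in (0:ℝ)..α, f2 (x, 0)) = 0 := by
      have he : EqOn (fun s : ℝ => f2 (s, 0)) (fun _ => (0:ℝ)) (uIcc 0 α) := by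
        intro s hs
        rw [uIcc_of_le hα.le] at hs
        have hmem : ((s, (0:ℝ)) : ℝ × ℝ) ∈ Q \ Ω :=
          ⟨⟨hs, left_mem_Icc.mpr hβ.le⟩, by simp [hΩdef]⟩
        simp [hf2def, hζ0 _ hmem]
      rw [intervalIntegral.integral_congr he, intervalIntegral.integral_zero]
    have hz1α : (∫ y in (0:ℝ)..β, f1 (α, y)) = 0 := by
      have he : EqOn (fun s : ℝ => f1 (α, s)) (fun _ => (0:ℝ)) (uIcc 0 β) := by
        intro s hs
        rw [uIcc_of_le hβ.le] at hs
        have hmem : ((α, s) : ℝ × ℝ) ∈ Q \ Ω :=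
          ⟨⟨right_mem_Icc.mpr hα.le, hs⟩, by simp [hΩdef]⟩
        simp [hf1def, hζ0 _ hmem]
      rw [intervalIntegral.integral_congr he, intervalIntegral.integral_zero]
    have hz10 : (∫ y in (0:ℝ)..β, f1 (0, y)) = 0 := by
      have he : EqOn (fun s : ℝ => f1 (0, s)) (fun _ => (0:ℝ)) (uIcc 0 β) := by
        intro s hs
        rw [uIcc_of_le hβ.le] at hs
        have hmem : (((0:ℝ), s) : ℝ × ℝ) ∈ Q \ Ω :=
          ⟨⟨left_mem_Icc.mpr hα.le, hs⟩, by simp [hΩdef]⟩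
        simp [hf1def, hζ0 _ hmem]
      rw [intervalIntegral.integral_congr he, intervalIntegral.integral_zero]
    rw [hz2β, hz20, hz1α, hz10, hIcc] at hb
    simp only [happ] at hb
    rw [hb]; ring
  have hΩ0 : (∫ x in Ω, h x) = 0 := by
    rw [setIntegral_congr_set haeq]; exact hdiv0
  -- pointwise inequality
  have key : ∀ x ∈ Ω, g x (Tstar x) ≤ g x (T x) + h x := by
    intro x hx
    have hxQ := hΩQ hx
    have hζx := hζd x hx
    have d1 : deriv (fun s => ζ (s, x.2)) x.1 = Dz x (1, 0) := (slice1_hasDerivAt hζx).deriv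
    have d2 : deriv (fun s => ζ (x.1, s)) x.2 = Dz x (0, 1) := (slice2_hasDerivAt hζx).deriv
    have hgd : HasFDerivAt (g x) (fderiv ℝ (g x) (Tstar x)) (Tstar x) :=
      ((hgdiff x hxQ) (Tstar x)).hasFDerivAt
    set Lg := fderiv ℝ (g x) (Tstar x) with hLgdef
    have a1 : deriv (fun s => g x (s, (Tstar x).2)) (Tstar x).1 = Lg (1, 0) :=
      (slice1_hasDerivAt hgd).deriv
    have a2 : deriv (fun s => g x ((Tstar x).1, s)) (Tstar x).2 = Lg (0, 1) :=
      (slice2_hasDerivAt hgd).deriv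
    have hgrad : g x (Tstar x) + Lg (T x - Tstar x) ≤ g x (T x) :=
      convex_gradient_ineq (hgconv x hxQ) hgd
    have hdecomp : Lg (T x - Tstar x) =
        ((T x).1 - (Tstar x).1) * Lg (1, 0) + ((T x).2 - (Tstar x).2) * Lg (0, 1) := by
      have hsub : (T x - Tstar x) = (((T x).1 - (Tstar x).1), ((T x).2 - (Tstar x).2)) := rfl
      rw [hsub, clm_decomp]
    obtain ⟨hk1, hk1e⟩ := hkkt1 x hx
    obtain ⟨hk2, hk2e⟩ := hkkt2 x hx
    rw [a1, d1] at hk1 hk1e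
    rw [a2, d2] at hk2 hk2e
    obtain ⟨hT1, hT2⟩ := hT.2.1 x hxQ
    obtain ⟨hS1, hS2⟩ := hTstar.2.1 x hxQ
    have hcomp1 : (Lg (1, 0) + Dz x (1, 0)) * (Tstar x).1 = 0 := by
      rcases lt_or_eq_of_le hS1 with hpos | h0
      · rw [hk1e hpos, zero_mul]
      · rw [← h0, mul_zero]
    have hcomp2 : (Lg (0, 1) + Dz x (0, 1)) * (Tstar x).2 = 0 := by
      rcases lt_or_eq_of_le hS2 with hpos | h0
      · rw [hk2e hpos, zero_mul]
      · rw [← h0, mul_zero]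
    have hprod1 : 0 ≤ (Lg (1, 0) + Dz x (1, 0)) * (T x).1 := mul_nonneg hk1 hT1
    have hprod2 : 0 ≤ (Lg (0, 1) + Dz x (0, 1)) * (T x).2 := mul_nonneg hk2 hT2
    -- compute h x on Ω
    have hQn := hQnx x hx
    have hTd : HasFDerivAt T (fderiv ℝ T x) x :=
      (((hT.1.differentiableOn one_ne_zero) x hxQ).differentiableAt hQn).hasFDerivAt
    have hSd : HasFDerivAt Tstar (fderiv ℝ Tstar x) x :=
      (((hTstar.1.differentiableOn one_ne_zero) x hxQ).differentiableAt hQn).hasFDerivAt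
    have hDWeq : DW x = fderiv ℝ T x - fderiv ℝ Tstar x := by
      simp only [hDWdef]
      rw [fderivWithin_of_mem_nhds hQn]
      exact (hTd.sub hSd).fderiv
    have hT11 : deriv (fun s => (T (s, x.2)).1) x.1 = (fderiv ℝ T x (1, 0)).1 :=
      (slice1_hasDerivAt hTd.fst).deriv
    have hT22 : deriv (fun s => (T (x.1, s)).2) x.2 = (fderiv ℝ T x (0, 1)).2 :=
      (slice2_hasDerivAt hTd.snd).deriv
    have hS11 : deriv (fun s => (Tstar (s, x.2)).1) x.1 = (fderiv ℝ Tstar x (1, 0)).1 :=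
      (slice1_hasDerivAt hSd.fst).deriv
    have hS22 : deriv (fun s => (Tstar (x.1, s)).2) x.2 = (fderiv ℝ Tstar x (0, 1)).2 :=
      (slice2_hasDerivAt hSd.snd).deriv
    have hρT : pdiv T x = ρ x := hT.2.2 x hx
    have hρS : pdiv Tstar x = ρ x := hTstar.2.2 x hx
    have hpdiv0 : (DW x (1, 0)).1 + (DW x (0, 1)).2 = 0 := by
      rw [hDWeq]
      simp only [ContinuousLinearMap.sub_apply, Prod.fst_sub, Prod.snd_sub]
      have e1 := hρT; have e2 := hρS
      rw [pdiv, hT11, hT22] at e1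
      rw [pdiv, hS11, hS22] at e2
      linarith
    have hhx : h x = (W x).1 * (Dz x (1, 0)) + (W x).2 * (Dz x (0, 1)) := by
      rw [hhdef]; simp only [hpdiv0, mul_zero, zero_add]
    have hW1 : (W x).1 = (T x).1 - (Tstar x).1 := rfl
    have hW2 : (W x).2 = (T x).2 - (Tstar x).2 := rfl
    have hi1 : 0 ≤ ((T x).1 - (Tstar x).1) * Lg (1, 0) + ((T x).1 - (Tstar x).1) * Dz x (1, 0) := by
      have hr : ((T x).1 - (Tstar x).1) * Lg (1, 0) + ((T x).1 - (Tstar x).1) * Dz x (1, 0) =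
          (Lg (1, 0) + Dz x (1, 0)) * (T x).1 - (Lg (1, 0) + Dz x (1, 0)) * (Tstar x).1 := by
        ring
      rw [hr, hcomp1, sub_zero]; exact hprod1
    have hi2 : 0 ≤ ((T x).2 - (Tstar x).2) * Lg (0, 1) + ((T x).2 - (Tstar x).2) * Dz x (0, 1) := by
      have hr : ((T x).2 - (Tstar x).2) * Lg (0, 1) + ((T x).2 - (Tstar x).2) * Dz x (0, 1) =
          (Lg (0, 1) + Dz x (0, 1)) * (T x).2 - (Lg (0, 1) + Dz x (0, 1)) * (Tstar x).2 := by
        ring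
      rw [hr, hcomp2, sub_zero]; exact hprod2
    rw [hhx, hW1, hW2]
    linarith [hgrad, hdecomp.symm.le, hi1, hi2, hdecomp.le]
  -- integrability
  have hTstarc : ContinuousOn Tstar Q := hTstar.1.continuousOn
  have hTc : ContinuousOn T Q := hT.1.continuousOn
  have hcgS : ContinuousOn (fun x => g x (Tstar x)) Q := by
    have := hgcont.comp (continuousOn_id.prodMk hTstarc)
      (fun x hx => mem_prod.mpr ⟨hx, mem_univ _⟩)
    exact this
  have hcgT : ContinuousOn (fun x => g x (T x)) Q := by
    have := hgcont.comp (continuousOn_id.prodMk hTc)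
      (fun x hx => mem_prod.mpr ⟨hx, mem_univ _⟩)
    exact this
  have I1 : IntegrableOn (fun x => g x (Tstar x)) Ω :=
    (hcgS.integrableOn_compact hQcompact).mono_set hΩQ
  have I2 : IntegrableOn (fun x => g x (T x)) Ω :=
    (hcgT.integrableOn_compact hQcompact).mono_set hΩQ
  have Ih : IntegrableOn h Ω :=
    (hhc.integrableOn_compact hQcompact).mono_set hΩQ
  calc (∫ x in Ω, g x (Tstar x)) ≤ ∫ x in Ω, (g x (T x) + h x) :=
        setIntegral_mono_on I1 (I2.add Ih) hΩmeas key
    _ = (∫ x in Ω, g x (T x)) + ∫ x in Ω, h x := integral_add I2 Ih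
    _ = ∫ x in Ω, g x (T x) := by rw [hΩ0, add_zero]
end

section
/- (Beckmann transformation: a flow satisfying the Wardrop conditions minimizes the Beckmann potential.) Let Ω=(0,α)×(0,β) be an open rectangle with closure Ω̄ and boundary ∂Ω, let ρ:Ω̄→ℝ be continuous, and let c1,c2:Ω̄×[0,∞)→ℝ be continuous congestion-dependent cost densities, each nondecreasing in its second argument. Define the Beckmann potential ψ(x,T)=∫₀^{T1} c1(x,s) ds + ∫₀^{T2} c2(x,s) ds. Suppose T* is a feasible flow and there is a C¹ function V:Ω̄→ℝ with V=0 on ∂Ω such that for every x∈Ω and i=1,2: c_i(x,T*_i(x)) + ∂V/∂x_i(x) ≥ 0, with equality whenever T*_i(x)>0 (the Wardrop equilibrium conditions, V being the minimal cost-to-go). Then for every feasible flow T one has ∫_Ω ψ(x,T*(x)) dx ≤ ∫_Ω ψ(x,T(x)) dx; i.e., the Wardrop equilibrium flow solves the global optimization problem with local cost ψ. -/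
open MeasureTheory Set

/-- The Beckmann potential `ψ(x,T) = ∫₀^{T1} c1(x,s) ds + ∫₀^{T2} c2(x,s) ds`. -/
noncomputable def beckmann (c1 c2 : ℝ × ℝ → ℝ → ℝ) (x : ℝ × ℝ) (T : ℝ × ℝ) : ℝ :=
  (∫ s in (0:ℝ)..T.1, c1 x s) + ∫ s in (0:ℝ)..T.2, c2 x s

private lemma tietzeExt {X : Type*} [TopologicalSpace X] [NormalSpace X]
    {S : Set X} (hS : IsClosed S) {F : X → ℝ} (hF : ContinuousOn F S) :
    ∃ G : X → ℝ, Continuous G ∧ EqOn G F S := by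
  obtain ⟨g, hg⟩ := ContinuousMap.exists_restrict_eq hS ⟨S.restrict F, hF.restrict⟩
  refine ⟨g, g.continuous, fun x hx => ?_⟩
  have := congrFun (congrArg DFunLike.coe hg) ⟨x, hx⟩
  exact this

private lemma convex_gain {d : ℝ → ℝ} (hd : Continuous d)
    (hmono : MonotoneOn d (Ici 0)) {a b : ℝ} (ha : 0 ≤ a) (hb : 0 ≤ b) :
    d a * (b - a) ≤ (∫ s in (0:ℝ)..b, d s) - ∫ s in (0:ℝ)..a, d s := by
  have hib : ∀ u v : ℝ, IntervalIntegrable d volume u v := fun u v => hd.intervalIntegrable u v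
  have hsub : (∫ s in (0:ℝ)..b, d s) - ∫ s in (0:ℝ)..a, d s = ∫ s in a..b, d s :=
    intervalIntegral.integral_interval_sub_left (hib 0 b) (hib 0 a)
  rw [hsub]
  rcases le_total a b with hab | hab
  · have h1 : ∫ s in a..b, d a ≤ ∫ s in a..b, d s := by
      apply intervalIntegral.integral_mono_on hab (intervalIntegrable_const) (hib a b)
      intro s hs
      exact hmono ha (le_trans ha hs.1) hs.1
    have h2 : ∫ s in a..b, (fun _ => d a) s = (b - a) * d a := by
      simp [intervalIntegral.integral_const, smul_eq_mul]
    rw [h2] at h1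
    linarith
  · have h1 : ∫ s in b..a, d s ≤ ∫ s in b..a, d a := by
      apply intervalIntegral.integral_mono_on hab (hib b a) (intervalIntegrable_const)
      intro s hs
      exact hmono (le_trans hb hs.1) ha hs.2
    have h2 : ∫ s in b..a, (fun _ => d a) s = (a - b) * d a := by
      simp [intervalIntegral.integral_const, smul_eq_mul]
    rw [h2] at h1
    have h3 : ∫ s in a..b, d s = -∫ s in b..a, d s := intervalIntegral.integral_symm b a
    rw [h3]
    linarith

private lemma hasDerivAt_slice1 {E : Type*} [NormedAddCommGroup E] [NormedSpace ℝ E]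
    {f : ℝ × ℝ → E} {x : ℝ × ℝ} (hf : DifferentiableAt ℝ f x) :
    HasDerivAt (fun s => f (s, x.2)) (fderiv ℝ f x (1, 0)) x.1 := by
  obtain ⟨x1, x2⟩ := x
  exact hf.hasFDerivAt.comp_hasDerivAt x1
    (HasDerivAt.prodMk (hasDerivAt_id x1) (hasDerivAt_const x1 x2))

private lemma hasDerivAt_slice2 {E : Type*} [NormedAddCommGroup E] [NormedSpace ℝ E]
    {f : ℝ × ℝ → E} {x : ℝ × ℝ} (hf : DifferentiableAt ℝ f x) :
    HasDerivAt (fun s => f (x.1, s)) (fderiv ℝ f x (0, 1)) x.2 := by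
  obtain ⟨x1, x2⟩ := x
  exact hf.hasFDerivAt.comp_hasDerivAt x2
    (HasDerivAt.prodMk (hasDerivAt_const x2 x1) (hasDerivAt_id x2))

private lemma hasDerivAt_slice1_fst {f : ℝ × ℝ → ℝ × ℝ} {x : ℝ × ℝ}
    (hf : DifferentiableAt ℝ f x) :
    HasDerivAt (fun s => (f (s, x.2)).1) ((fderiv ℝ f x (1, 0)).1) x.1 := by
  have h := hasDerivAt_slice1 hf
  have h2 := (ContinuousLinearMap.fst ℝ ℝ ℝ).hasFDerivAt.comp_hasDerivAt x.1 h
  exact h2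

private lemma hasDerivAt_slice2_snd {f : ℝ × ℝ → ℝ × ℝ} {x : ℝ × ℝ}
    (hf : DifferentiableAt ℝ f x) :
    HasDerivAt (fun s => (f (x.1, s)).2) ((fderiv ℝ f x (0, 1)).2) x.2 := by
  have h := hasDerivAt_slice2 hf
  have h2 := (ContinuousLinearMap.snd ℝ ℝ ℝ).hasFDerivAt.comp_hasDerivAt x.2 h
  exact h2

private lemma diffAt_of_contDiffOn {E : Type*} [NormedAddCommGroup E] [NormedSpace ℝ E]
    {f : ℝ × ℝ → E} {K : Set (ℝ × ℝ)} (hf : ContDiffOn ℝ 1 f K) {x : ℝ × ℝ}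
    (hK : K ∈ nhds x) : DifferentiableAt ℝ f x :=
  ((hf.differentiableOn one_ne_zero) x (mem_of_mem_nhds hK)).differentiableAt hK

/-- Beckmann transformation: a feasible flow satisfying the Wardrop
equilibrium conditions (with cost-to-go `V`) minimizes the integral of the Beckmann
potential among feasible flows. -/
theorem wardrop_minimizes_beckmann (α β : ℝ) (hα : 0 < α) (hβ : 0 < β)
    (ρ : ℝ × ℝ → ℝ) (hρ : ContinuousOn ρ (Icc 0 α ×ˢ Icc 0 β))
    (c1 c2 : ℝ × ℝ → ℝ → ℝ)
    (hc1cont : ContinuousOn (fun q : (ℝ × ℝ) × ℝ => c1 q.1 q.2)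
      ((Icc 0 α ×ˢ Icc 0 β) ×ˢ Ici (0:ℝ)))
    (hc2cont : ContinuousOn (fun q : (ℝ × ℝ) × ℝ => c2 q.1 q.2)
      ((Icc 0 α ×ˢ Icc 0 β) ×ˢ Ici (0:ℝ)))
    (hc1mono : ∀ x ∈ Icc 0 α ×ˢ Icc 0 β, MonotoneOn (c1 x) (Ici (0:ℝ)))
    (hc2mono : ∀ x ∈ Icc 0 α ×ˢ Icc 0 β, MonotoneOn (c2 x) (Ici (0:ℝ)))
    (Tstar : ℝ × ℝ → ℝ × ℝ) (hTstar : FeasibleFlow α β ρ Tstar)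
    (V : ℝ × ℝ → ℝ) (hV : ContDiffOn ℝ 1 V (Icc 0 α ×ˢ Icc 0 β))
    (hVbd : ∀ x ∈ (Icc 0 α ×ˢ Icc 0 β) \ (Ioo 0 α ×ˢ Ioo 0 β), V x = 0)
    (hw1 : ∀ x ∈ Ioo 0 α ×ˢ Ioo 0 β,
      0 ≤ c1 x (Tstar x).1 + deriv (fun s => V (s, x.2)) x.1 ∧
      (0 < (Tstar x).1 → c1 x (Tstar x).1 + deriv (fun s => V (s, x.2)) x.1 = 0))
    (hw2 : ∀ x ∈ Ioo 0 α ×ˢ Ioo 0 β,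
      0 ≤ c2 x (Tstar x).2 + deriv (fun s => V (x.1, s)) x.2 ∧
      (0 < (Tstar x).2 → c2 x (Tstar x).2 + deriv (fun s => V (x.1, s)) x.2 = 0)) :
    ∀ T : ℝ × ℝ → ℝ × ℝ, FeasibleFlow α β ρ T →
      (∫ x in Ioo 0 α ×ˢ Ioo 0 β, beckmann c1 c2 x (Tstar x)) ≤
        ∫ x in Ioo 0 α ×ˢ Ioo 0 β, beckmann c1 c2 x (T x) := by
  intro T hT
  obtain ⟨hT1, hT2, hT3⟩ := hT
  obtain ⟨hS1, hS2, hS3⟩ := hTstar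
  set K : Set (ℝ × ℝ) := Icc 0 α ×ˢ Icc 0 β with hKdef
  set Ω : Set (ℝ × ℝ) := Ioo 0 α ×ˢ Ioo 0 β with hΩdef
  have hKcl : IsClosed K := isClosed_Icc.prod isClosed_Icc
  have hKc : IsCompact K := isCompact_Icc.prod isCompact_Icc
  have hΩK : Ω ⊆ K := prod_mono Ioo_subset_Icc_self Ioo_subset_Icc_self
  have hΩm : MeasurableSet Ω := measurableSet_Ioo.prod measurableSet_Ioo
  have hΩo : IsOpen Ω := isOpen_Ioo.prod isOpen_Ioo
  have hKnhds : ∀ x ∈ Ω, K ∈ nhds x := fun x hx =>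
    Filter.mem_of_superset (hΩo.mem_nhds hx) hΩK
  have hUD : UniqueDiffOn ℝ K := (uniqueDiffOn_Icc hα).prod (uniqueDiffOn_Icc hβ)
  -- continuous functions on K
  have hVc : ContinuousOn V K := hV.continuousOn
  have hTc : ContinuousOn T K := hT1.continuousOn
  have hSc : ContinuousOn Tstar K := hS1.continuousOn
  set A1 : ℝ × ℝ → ℝ := fun x => fderivWithin ℝ V K x (1, 0) with hA1def
  set A2 : ℝ × ℝ → ℝ := fun x => fderivWithin ℝ V K x (0, 1) with hA2def
  set D1 : ℝ × ℝ → ℝ := fun x =>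
    (fderivWithin ℝ T K x (1, 0)).1 - (fderivWithin ℝ Tstar K x (1, 0)).1 with hD1def
  set D2 : ℝ × ℝ → ℝ := fun x =>
    (fderivWithin ℝ T K x (0, 1)).2 - (fderivWithin ℝ Tstar K x (0, 1)).2 with hD2def
  set W1 : ℝ × ℝ → ℝ := fun x => (T x).1 - (Tstar x).1 with hW1def
  set W2 : ℝ × ℝ → ℝ := fun x => (T x).2 - (Tstar x).2 with hW2def
  set g1 : ℝ × ℝ → ℝ := fun x => A1 x * W1 x + V x * D1 x with hg1def
  set g2 : ℝ × ℝ → ℝ := fun x => A2 x * W2 x + V x * D2 x with hg2def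
  have hFVc : ContinuousOn (fderivWithin ℝ V K) K := hV.continuousOn_fderivWithin hUD le_rfl
  have hFTc : ContinuousOn (fderivWithin ℝ T K) K := hT1.continuousOn_fderivWithin hUD le_rfl
  have hFSc : ContinuousOn (fderivWithin ℝ Tstar K) K :=
    hS1.continuousOn_fderivWithin hUD le_rfl
  have hA1c : ContinuousOn A1 K := hFVc.clm_apply continuousOn_const
  have hA2c : ContinuousOn A2 K := hFVc.clm_apply continuousOn_const
  have hD1c : ContinuousOn D1 K :=
    (continuous_fst.comp_continuousOn (hFTc.clm_apply continuousOn_const)).sub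
      (continuous_fst.comp_continuousOn (hFSc.clm_apply continuousOn_const))
  have hD2c : ContinuousOn D2 K :=
    (continuous_snd.comp_continuousOn (hFTc.clm_apply continuousOn_const)).sub
      (continuous_snd.comp_continuousOn (hFSc.clm_apply continuousOn_const))
  have hW1c : ContinuousOn W1 K :=
    (continuous_fst.comp_continuousOn hTc).sub (continuous_fst.comp_continuousOn hSc)
  have hW2c : ContinuousOn W2 K :=
    (continuous_snd.comp_continuousOn hTc).sub (continuous_snd.comp_continuousOn hSc)
  have hg1c : ContinuousOn g1 K := (hA1c.mul hW1c).add (hVc.mul hD1c)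
  have hg2c : ContinuousOn g2 K := (hA2c.mul hW2c).add (hVc.mul hD2c)
  have hg1int : IntegrableOn g1 Ω := (hg1c.integrableOn_compact hKc).mono_set hΩK
  have hg2int : IntegrableOn g2 Ω := (hg2c.integrableOn_compact hKc).mono_set hΩK
  -- differentiability at interior points
  have hVd : ∀ x ∈ Ω, DifferentiableAt ℝ V x := fun x hx =>
    diffAt_of_contDiffOn hV (hKnhds x hx)
  have hTd : ∀ x ∈ Ω, DifferentiableAt ℝ T x := fun x hx =>
    diffAt_of_contDiffOn hT1 (hKnhds x hx)
  have hSd : ∀ x ∈ Ω, DifferentiableAt ℝ Tstar x := fun x hx =>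
    diffAt_of_contDiffOn hS1 (hKnhds x hx)
  have hfW : ∀ {f : ℝ × ℝ → ℝ × ℝ}, ContDiffOn ℝ 1 f K → ∀ x ∈ Ω,
      fderivWithin ℝ f K x = fderiv ℝ f x := fun hf x hx =>
    fderivWithin_of_mem_nhds (hKnhds x hx)
  have hfV : ∀ x ∈ Ω, fderivWithin ℝ V K x = fderiv ℝ V x := fun x hx =>
    fderivWithin_of_mem_nhds (hKnhds x hx)
  -- identification of the slice derivatives
  have hA1eq : ∀ x ∈ Ω, deriv (fun s => V (s, x.2)) x.1 = A1 x := by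
    intro x hx
    simp only [hA1def]
    rw [hfV x hx]
    exact (hasDerivAt_slice1 (hVd x hx)).deriv
  have hA2eq : ∀ x ∈ Ω, deriv (fun s => V (x.1, s)) x.2 = A2 x := by
    intro x hx
    simp only [hA2def]
    rw [hfV x hx]
    exact (hasDerivAt_slice2 (hVd x hx)).deriv
  have hdivW : ∀ x ∈ Ω, D1 x + D2 x = 0 := by
    intro x hx
    have e1 : pdiv T x = (fderivWithin ℝ T K x (1, 0)).1 + (fderivWithin ℝ T K x (0, 1)).2 := by
      rw [pdiv, hfW hT1 x hx, (hasDerivAt_slice1_fst (hTd x hx)).deriv,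
        (hasDerivAt_slice2_snd (hTd x hx)).deriv]
    have e2 : pdiv Tstar x
        = (fderivWithin ℝ Tstar K x (1, 0)).1 + (fderivWithin ℝ Tstar K x (0, 1)).2 := by
      rw [pdiv, hfW hS1 x hx, (hasDerivAt_slice1_fst (hSd x hx)).deriv,
        (hasDerivAt_slice2_snd (hSd x hx)).deriv]
    have e3 := hT3 x hx
    have e4 := hS3 x hx
    have : pdiv T x = pdiv Tstar x := by rw [e3, e4]
    rw [e1, e2] at this
    simp only [hD1def, hD2def]
    linarith
  -- boundary vanishing of V
  have hVzero1 : ∀ y ∈ Ioo (0:ℝ) β, V (0, y) = 0 ∧ V (α, y) = 0 := by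
    intro y hy
    constructor
    · apply hVbd
      refine ⟨mem_prod.mpr ⟨⟨le_rfl, hα.le⟩, Ioo_subset_Icc_self hy⟩, fun hc => ?_⟩
      exact lt_irrefl (0:ℝ) (mem_prod.mp hc).1.1
    · apply hVbd
      refine ⟨mem_prod.mpr ⟨⟨hα.le, le_rfl⟩, Ioo_subset_Icc_self hy⟩, fun hc => ?_⟩
      exact lt_irrefl α (mem_prod.mp hc).1.2
  have hVzero2 : ∀ t ∈ Ioo (0:ℝ) α, V (t, 0) = 0 ∧ V (t, β) = 0 := by
    intro t ht
    constructor
    · apply hVbd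
      refine ⟨mem_prod.mpr ⟨Ioo_subset_Icc_self ht, ⟨le_rfl, hβ.le⟩⟩, fun hc => ?_⟩
      exact lt_irrefl (0:ℝ) (mem_prod.mp hc).2.1
    · apply hVbd
      refine ⟨mem_prod.mpr ⟨Ioo_subset_Icc_self ht, ⟨hβ.le, le_rfl⟩⟩, fun hc => ?_⟩
      exact lt_irrefl β (mem_prod.mp hc).2.2
  -- inner FTC in the x1 direction
  have hinner1 : ∀ y ∈ Ioo (0:ℝ) β, (∫ s in Ioo (0:ℝ) α, g1 (s, y)) = 0 := by
    intro y hy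
    have hmap : ∀ s ∈ Icc (0:ℝ) α, ((s, y) : ℝ × ℝ) ∈ K := fun s hs =>
      mem_prod.mpr ⟨hs, Ioo_subset_Icc_self hy⟩
    have hsl : Continuous (fun s : ℝ => ((s, y) : ℝ × ℝ)) :=
      continuous_id.prodMk continuous_const
    have hφc : ContinuousOn (fun s => V (s, y) * W1 (s, y)) (Icc 0 α) :=
      (hVc.comp hsl.continuousOn hmap).mul (hW1c.comp hsl.continuousOn hmap)
    have hφd : ∀ s ∈ Ioo (0:ℝ) α,
        HasDerivWithinAt (fun s => V (s, y) * W1 (s, y)) (g1 (s, y)) (Ioi s) s := by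
      intro s hs
      have hxΩ : ((s, y) : ℝ × ℝ) ∈ Ω := mem_prod.mpr ⟨hs, hy⟩
      have h1 : HasDerivAt (fun u => V (u, y)) (A1 (s, y)) s := by
        have h := hasDerivAt_slice1 (hVd _ hxΩ)
        simp only [hA1def]
        rw [hfV _ hxΩ]
        exact h
      have h2 : HasDerivAt (fun u => W1 (u, y)) (D1 (s, y)) s := by
        have hT' := hasDerivAt_slice1_fst (hTd _ hxΩ)
        have hS' := hasDerivAt_slice1_fst (hSd _ hxΩ)
        simp only [hD1def, hW1def]
        rw [hfW hT1 _ hxΩ, hfW hS1 _ hxΩ]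
        exact hT'.sub hS'
      have h3 := h1.mul h2
      simp only [hg1def]
      exact h3.hasDerivWithinAt
    have hφint : IntervalIntegrable (fun s => g1 (s, y)) volume 0 α := by
      apply ContinuousOn.intervalIntegrable
      rw [uIcc_of_le hα.le]
      exact hg1c.comp hsl.continuousOn hmap
    have hFTC := intervalIntegral.integral_eq_sub_of_hasDeriv_right_of_le hα.le hφc hφd hφint
    have hval : (∫ s in (0:ℝ)..α, g1 (s, y)) = 0 := by
      rw [hFTC]
      simp [(hVzero1 y hy).1, (hVzero1 y hy).2]
    rw [← integral_Ioc_eq_integral_Ioo, ← intervalIntegral.integral_of_le hα.le]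
    exact hval
  -- inner FTC in the x2 direction
  have hinner2 : ∀ t ∈ Ioo (0:ℝ) α, (∫ s in Ioo (0:ℝ) β, g2 (t, s)) = 0 := by
    intro t ht
    have hmap : ∀ s ∈ Icc (0:ℝ) β, ((t, s) : ℝ × ℝ) ∈ K := fun s hs =>
      mem_prod.mpr ⟨Ioo_subset_Icc_self ht, hs⟩
    have hsl : Continuous (fun s : ℝ => ((t, s) : ℝ × ℝ)) :=
      continuous_const.prodMk continuous_id
    have hφc : ContinuousOn (fun s => V (t, s) * W2 (t, s)) (Icc 0 β) :=
      (hVc.comp hsl.continuousOn hmap).mul (hW2c.comp hsl.continuousOn hmap)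
    have hφd : ∀ s ∈ Ioo (0:ℝ) β,
        HasDerivWithinAt (fun s => V (t, s) * W2 (t, s)) (g2 (t, s)) (Ioi s) s := by
      intro s hs
      have hxΩ : ((t, s) : ℝ × ℝ) ∈ Ω := mem_prod.mpr ⟨ht, hs⟩
      have h1 : HasDerivAt (fun u => V (t, u)) (A2 (t, s)) s := by
        have h := hasDerivAt_slice2 (hVd _ hxΩ)
        simp only [hA2def]
        rw [hfV _ hxΩ]
        exact h
      have h2 : HasDerivAt (fun u => W2 (t, u)) (D2 (t, s)) s := by
        have hT' := hasDerivAt_slice2_snd (hTd _ hxΩ)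
        have hS' := hasDerivAt_slice2_snd (hSd _ hxΩ)
        simp only [hD2def, hW2def]
        rw [hfW hT1 _ hxΩ, hfW hS1 _ hxΩ]
        exact hT'.sub hS'
      have h3 := h1.mul h2
      simp only [hg2def]
      exact h3.hasDerivWithinAt
    have hφint : IntervalIntegrable (fun s => g2 (t, s)) volume 0 β := by
      apply ContinuousOn.intervalIntegrable
      rw [uIcc_of_le hβ.le]
      exact hg2c.comp hsl.continuousOn hmap
    have hFTC := intervalIntegral.integral_eq_sub_of_hasDeriv_right_of_le hβ.le hφc hφd hφint
    have hval : (∫ s in (0:ℝ)..β, g2 (t, s)) = 0 := by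
      rw [hFTC]
      simp [(hVzero2 t ht).1, (hVzero2 t ht).2]
    rw [← integral_Ioc_eq_integral_Ioo, ← intervalIntegral.integral_of_le hβ.le]
    exact hval
  -- Fubini: both g-integrals vanish
  have hrestrict : (volume : Measure (ℝ × ℝ)).restrict Ω
      = ((volume : Measure ℝ).restrict (Ioo 0 α)).prod
          ((volume : Measure ℝ).restrict (Ioo 0 β)) := by
    rw [Measure.volume_eq_prod]
    exact (Measure.prod_restrict _ _).symm
  have hZ1 : (∫ x in Ω, g1 x) = 0 := by
    have hint : Integrable g1 (((volume : Measure ℝ).restrict (Ioo 0 α)).prod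
        ((volume : Measure ℝ).restrict (Ioo 0 β))) := by
      rw [← hrestrict]; exact hg1int
    calc (∫ x in Ω, g1 x)
        = ∫ y in Ioo (0:ℝ) β, ∫ s in Ioo (0:ℝ) α, g1 (s, y) := by
          rw [show (volume : Measure (ℝ × ℝ)).restrict Ω = _ from hrestrict]
          exact MeasureTheory.integral_prod_symm g1 hint
      _ = ∫ _y in Ioo (0:ℝ) β, (0:ℝ) :=
          setIntegral_congr_fun measurableSet_Ioo (fun y hy => hinner1 y hy)
      _ = 0 := by simp
  have hZ2 : (∫ x in Ω, g2 x) = 0 := by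
    have hint : Integrable g2 (((volume : Measure ℝ).restrict (Ioo 0 α)).prod
        ((volume : Measure ℝ).restrict (Ioo 0 β))) := by
      rw [← hrestrict]; exact hg2int
    calc (∫ x in Ω, g2 x)
        = ∫ t in Ioo (0:ℝ) α, ∫ s in Ioo (0:ℝ) β, g2 (t, s) := by
          rw [show (volume : Measure (ℝ × ℝ)).restrict Ω = _ from hrestrict]
          exact MeasureTheory.integral_prod g2 hint
      _ = ∫ _t in Ioo (0:ℝ) α, (0:ℝ) :=
          setIntegral_congr_fun measurableSet_Ioo (fun t ht => hinner2 t ht)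
      _ = 0 := by simp
  -- Tietze extensions of the cost densities
  obtain ⟨d1, hd1c, hd1eq⟩ := tietzeExt (hKcl.prod isClosed_Ici) hc1cont
  obtain ⟨d2, hd2c, hd2eq⟩ := tietzeExt (hKcl.prod isClosed_Ici) hc2cont
  have hbeck1 : ∀ x ∈ K, ∀ t : ℝ, 0 ≤ t →
      (∫ s in (0:ℝ)..t, c1 x s) = ∫ s in (0:ℝ)..t, d1 (x, s) := by
    intro x hx t ht
    apply intervalIntegral.integral_congr
    intro s hs
    rw [uIcc_of_le ht] at hs
    exact (hd1eq (mk_mem_prod hx hs.1)).symm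
  have hbeck2 : ∀ x ∈ K, ∀ t : ℝ, 0 ≤ t →
      (∫ s in (0:ℝ)..t, c2 x s) = ∫ s in (0:ℝ)..t, d2 (x, s) := by
    intro x hx t ht
    apply intervalIntegral.integral_congr
    intro s hs
    rw [uIcc_of_le ht] at hs
    exact (hd2eq (mk_mem_prod hx hs.1)).symm
  -- continuity (hence integrability) of the Beckmann integrands
  have hG1 : Continuous (fun p : (ℝ × ℝ) × ℝ => ∫ s in (0:ℝ)..p.2, d1 (p.1, s)) :=
    intervalIntegral.continuous_parametric_primitive_of_continuous
      (f := fun (q : ℝ × ℝ) (s : ℝ) => d1 (q, s)) (μ := volume) (a₀ := 0)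
      (hd1c.comp (continuous_fst.prodMk continuous_snd))
  have hG2 : Continuous (fun p : (ℝ × ℝ) × ℝ => ∫ s in (0:ℝ)..p.2, d2 (p.1, s)) :=
    intervalIntegral.continuous_parametric_primitive_of_continuous
      (f := fun (q : ℝ × ℝ) (s : ℝ) => d2 (q, s)) (μ := volume) (a₀ := 0)
      (hd2c.comp (continuous_fst.prodMk continuous_snd))
  have hbc : ∀ (F : ℝ × ℝ → ℝ × ℝ), ContinuousOn F K →
      (∀ x ∈ K, 0 ≤ (F x).1 ∧ 0 ≤ (F x).2) →
      ContinuousOn (fun x => beckmann c1 c2 x (F x)) K := by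
    intro F hFc hFnn
    have h1 : ContinuousOn (fun x : ℝ × ℝ => ∫ s in (0:ℝ)..(F x).1, d1 (x, s)) K := by
      have h := hG1.comp_continuousOn
        ((continuousOn_id (s := K)).prodMk (continuous_fst.comp_continuousOn hFc))
      exact h
    have h2 : ContinuousOn (fun x : ℝ × ℝ => ∫ s in (0:ℝ)..(F x).2, d2 (x, s)) K := by
      have h := hG2.comp_continuousOn
        ((continuousOn_id (s := K)).prodMk (continuous_snd.comp_continuousOn hFc))
      exact h
    apply (h1.add h2).congr
    intro x hx
    simp only [beckmann, Pi.add_apply]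
    rw [hbeck1 x hx _ (hFnn x hx).1, hbeck2 x hx _ (hFnn x hx).2]
  have hψTint : IntegrableOn (fun x => beckmann c1 c2 x (T x)) Ω :=
    ((hbc T hTc hT2).integrableOn_compact hKc).mono_set hΩK
  have hψSint : IntegrableOn (fun x => beckmann c1 c2 x (Tstar x)) Ω :=
    ((hbc Tstar hSc hS2).integrableOn_compact hKc).mono_set hΩK
  -- pointwise inequality
  have hpt : ∀ x ∈ Ω,
      beckmann c1 c2 x (Tstar x) ≤ beckmann c1 c2 x (T x) + (g1 x + g2 x) := by
    intro x hx
    have hxK := hΩK hx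
    obtain ⟨hb1, hb2⟩ := hT2 x hxK
    obtain ⟨ha1, ha2⟩ := hS2 x hxK
    -- convexity gain, direction 1
    have hm1 : MonotoneOn (fun s => d1 (x, s)) (Ici 0) := by
      intro u hu v hv huv
      simp only
      rw [hd1eq (mk_mem_prod hxK hu), hd1eq (mk_mem_prod hxK hv)]
      exact hc1mono x hxK hu hv huv
    have hm2 : MonotoneOn (fun s => d2 (x, s)) (Ici 0) := by
      intro u hu v hv huv
      simp only
      rw [hd2eq (mk_mem_prod hxK hu), hd2eq (mk_mem_prod hxK hv)]
      exact hc2mono x hxK hu hv huv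
    have hgain1 := convex_gain (d := fun s => d1 (x, s))
      (by exact hd1c.comp (continuous_const.prodMk continuous_id)) hm1 ha1 hb1
    have hgain2 := convex_gain (d := fun s => d2 (x, s))
      (by exact hd2c.comp (continuous_const.prodMk continuous_id)) hm2 ha2 hb2
    beta_reduce at hgain1 hgain2
    rw [hd1eq (mk_mem_prod hxK (mem_Ici.mpr ha1)), ← hbeck1 x hxK _ hb1, ← hbeck1 x hxK _ ha1] at hgain1
    rw [hd2eq (mk_mem_prod hxK (mem_Ici.mpr ha2)), ← hbeck2 x hxK _ hb2, ← hbeck2 x hxK _ ha2] at hgain2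
    -- Wardrop conditions
    obtain ⟨hge1, heq1⟩ := hw1 x hx
    obtain ⟨hge2, heq2⟩ := hw2 x hx
    rw [hA1eq x hx] at hge1 heq1
    rw [hA2eq x hx] at hge2 heq2
    have hstep1 : -(A1 x) * ((T x).1 - (Tstar x).1)
        ≤ c1 x (Tstar x).1 * ((T x).1 - (Tstar x).1) := by
      rcases eq_or_lt_of_le ha1 with h0 | h0
      · rw [← h0] at hge1 ⊢
        nlinarith [mul_nonneg hge1 hb1]
      · have hc : c1 x (Tstar x).1 = -(A1 x) := by linarith [heq1 h0]
        rw [hc]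
    have hstep2 : -(A2 x) * ((T x).2 - (Tstar x).2)
        ≤ c2 x (Tstar x).2 * ((T x).2 - (Tstar x).2) := by
      rcases eq_or_lt_of_le ha2 with h0 | h0
      · rw [← h0] at hge2 ⊢
        nlinarith [mul_nonneg hge2 hb2]
      · have hc : c2 x (Tstar x).2 = -(A2 x) := by linarith [heq2 h0]
        rw [hc]
    have hdiv := hdivW x hx
    have hgsum : g1 x + g2 x = A1 x * W1 x + A2 x * W2 x := by
      simp only [hg1def, hg2def]
      have hD : D2 x = -D1 x := by linarith
      rw [hD]
      ring
    rw [hgsum]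
    simp only [hW1def, hW2def, beckmann]
    simp only [hW1def, hW2def, beckmann] at hgain1 hgain2
    nlinarith [hgain1, hgain2, hstep1, hstep2]
  -- conclusion
  have hGint : IntegrableOn (fun x => g1 x + g2 x) Ω := by exact hg1int.add hg2int
  have hSum : IntegrableOn (fun x => beckmann c1 c2 x (T x) + (g1 x + g2 x)) Ω := by
    exact hψTint.add hGint
  have hkey := setIntegral_mono_on hψSint hSum hΩm hpt
  rw [integral_add hψTint hGint, integral_add hg1int hg2int, hZ1, hZ2] at hkey
  simpa using hkey
end

section
/- (For monomial congestion costs, the user equilibrium is a global optimum.) Let Ω=(0,α)×(0,β) be an open rectangle with closure Ω̄ and boundary ∂Ω, let ρ:Ω̄→ℝ be continuous, let β̂≥1, and let k1,k2:Ω̄→ℝ be continuous and positive. Consider the monomial congestion costs c_i(x,s)=k_i(x) s^{β̂}. Suppose T* is a feasible flow and there is a C¹ function V:Ω̄→ℝ with V=0 on ∂Ω such that for every x∈Ω and i=1,2: k_i(x) T*_i(x)^{β̂} + ∂V/∂x_i(x) ≥ 0, with equality whenever T*_i(x)>0 (the Wardrop equilibrium conditions). Then T* minimizes the global transportation cost: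 for every feasible flow T, ∫_Ω [k1(x)T*_1(x)^{β̂+1} + k2(x)T*_2(x)^{β̂+1}] dx ≤ ∫_Ω [k1(x)T_1(x)^{β̂+1} + k2(x)T_2(x)^{β̂+1}] dx. -/
open MeasureTheory Set

/-- First-order Taylor/convexity inequality for `t ↦ t ^ (p+1)` on `[0, ∞)`. -/
lemma rpow_taylor {s t p : ℝ} (hs : 0 ≤ s) (ht : 0 ≤ t) (hp : 1 ≤ p) :
    s ^ (p + 1) + (p + 1) * s ^ p * (t - s) ≤ t ^ (p + 1) := by
  have hp0 : (0 : ℝ) < p := lt_of_lt_of_le one_pos hp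
  rcases eq_or_lt_of_le hs with h | h
  · rw [← h, Real.zero_rpow (by linarith : p + 1 ≠ 0), Real.zero_rpow (ne_of_gt hp0)]
    simpa using Real.rpow_nonneg ht (p + 1)
  · have hz : -1 ≤ t / s - 1 := by
      have : 0 ≤ t / s := div_nonneg ht h.le
      linarith
    have hb := one_add_mul_self_le_rpow_one_add hz (by linarith : (1 : ℝ) ≤ p + 1)
    rw [show (1 : ℝ) + (t / s - 1) = t / s by ring, Real.div_rpow ht h.le] at hb
    have hsp : (0 : ℝ) < s ^ (p + 1) := Real.rpow_pos_of_pos h _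
    have h2 := mul_le_mul_of_nonneg_left hb hsp.le
    rw [mul_div_cancel₀ _ (ne_of_gt hsp)] at h2
    have hkey : s ^ (p + 1) * (1 + (p + 1) * (t / s - 1))
        = s ^ (p + 1) + (p + 1) * s ^ p * (t - s) := by
      have hsp1 : s ^ (p + 1) = s ^ p * s := by
        rw [Real.rpow_add h, Real.rpow_one]
      rw [hsp1]
      field_simp
    rw [hkey] at h2
    exact h2

/-- Partial derivative in the first coordinate via the full Fréchet derivative. -/
lemma hasDerivAt_comp_fst {E : Type*} [NormedAddCommGroup E] [NormedSpace ℝ E]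
    {F : ℝ × ℝ → E} {D : ℝ × ℝ →L[ℝ] E} {x : ℝ × ℝ} (h : HasFDerivAt F D x) :
    HasDerivAt (fun s => F (s, x.2)) (D (1, 0)) x.1 := by
  have h1 : HasDerivAt (fun s : ℝ => ((s, x.2) : ℝ × ℝ)) (((1 : ℝ), (0 : ℝ))) x.1 :=
    (hasDerivAt_id' (x := x.1)).prodMk (hasDerivAt_const x.1 x.2)
  have h2 : HasFDerivAt F D ((fun s : ℝ => ((s, x.2) : ℝ × ℝ)) x.1) := by
    simpa using h
  exact h2.comp_hasDerivAt x.1 h1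

/-- Partial derivative in the second coordinate via the full Fréchet derivative. -/
lemma hasDerivAt_comp_snd {E : Type*} [NormedAddCommGroup E] [NormedSpace ℝ E]
    {F : ℝ × ℝ → E} {D : ℝ × ℝ →L[ℝ] E} {x : ℝ × ℝ} (h : HasFDerivAt F D x) :
    HasDerivAt (fun s => F (x.1, s)) (D (0, 1)) x.2 := by
  have h1 : HasDerivAt (fun s : ℝ => ((x.1, s) : ℝ × ℝ)) (((0 : ℝ), (1 : ℝ))) x.2 :=
    (hasDerivAt_const x.2 x.1).prodMk (hasDerivAt_id' (x := x.2))
  have h2 : HasFDerivAt F D ((fun s : ℝ => ((x.1, s) : ℝ × ℝ)) x.2) := by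
    simpa using h
  exact h2.comp_hasDerivAt x.2 h1

set_option maxHeartbeats 2000000 in
/-- for monomial congestion costs `cᵢ(x,s) = kᵢ(x) s^β̂`, a Wardrop
equilibrium flow minimizes the global transportation cost. -/
theorem monomial_wardrop_is_global_opt (α β : ℝ) (hα : 0 < α) (hβ : 0 < β)
    (ρ : ℝ × ℝ → ℝ) (hρ : ContinuousOn ρ (Icc 0 α ×ˢ Icc 0 β))
    (bhat : ℝ) (hbhat : 1 ≤ bhat)
    (k1 k2 : ℝ × ℝ → ℝ)
    (hk1cont : ContinuousOn k1 (Icc 0 α ×ˢ Icc 0 β))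
    (hk2cont : ContinuousOn k2 (Icc 0 α ×ˢ Icc 0 β))
    (hk1pos : ∀ x ∈ Icc 0 α ×ˢ Icc 0 β, 0 < k1 x)
    (hk2pos : ∀ x ∈ Icc 0 α ×ˢ Icc 0 β, 0 < k2 x)
    (Tstar : ℝ × ℝ → ℝ × ℝ) (hTstar : FeasibleFlow α β ρ Tstar)
    (V : ℝ × ℝ → ℝ) (hV : ContDiffOn ℝ 1 V (Icc 0 α ×ˢ Icc 0 β))
    (hVbd : ∀ x ∈ (Icc 0 α ×ˢ Icc 0 β) \ (Ioo 0 α ×ˢ Ioo 0 β), V x = 0)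
    (hw1 : ∀ x ∈ Ioo 0 α ×ˢ Ioo 0 β,
      0 ≤ k1 x * (Tstar x).1 ^ bhat + deriv (fun s => V (s, x.2)) x.1 ∧
      (0 < (Tstar x).1 →
        k1 x * (Tstar x).1 ^ bhat + deriv (fun s => V (s, x.2)) x.1 = 0))
    (hw2 : ∀ x ∈ Ioo 0 α ×ˢ Ioo 0 β,
      0 ≤ k2 x * (Tstar x).2 ^ bhat + deriv (fun s => V (x.1, s)) x.2 ∧
      (0 < (Tstar x).2 →
        k2 x * (Tstar x).2 ^ bhat + deriv (fun s => V (x.1, s)) x.2 = 0)) :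
    ∀ T : ℝ × ℝ → ℝ × ℝ, FeasibleFlow α β ρ T →
      (∫ x in Ioo 0 α ×ˢ Ioo 0 β,
          (k1 x * (Tstar x).1 ^ (bhat + 1) + k2 x * (Tstar x).2 ^ (bhat + 1))) ≤
        ∫ x in Ioo 0 α ×ˢ Ioo 0 β,
          (k1 x * (T x).1 ^ (bhat + 1) + k2 x * (T x).2 ^ (bhat + 1)) := by
  intro T hT
  obtain ⟨hTc, hTn, hTdvg⟩ := hT
  obtain ⟨hSc, hSn, hSdvg⟩ := hTstar
  set K : Set (ℝ × ℝ) := Icc 0 α ×ˢ Icc 0 β with hKdef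
  set Om : Set (ℝ × ℝ) := Ioo 0 α ×ˢ Ioo 0 β with hOmdef
  have hOmK : Om ⊆ K := prod_mono Ioo_subset_Icc_self Ioo_subset_Icc_self
  have hcomp : IsCompact K := isCompact_Icc.prod isCompact_Icc
  have hud : UniqueDiffOn ℝ K := (uniqueDiffOn_Icc hα).prod (uniqueDiffOn_Icc hβ)
  have hOmOpen : IsOpen Om := isOpen_Ioo.prod isOpen_Ioo
  have hKnhds : ∀ x ∈ Om, K ∈ nhds x := fun x hx =>
    mem_nhds_iff.2 ⟨Om, hOmK, hOmOpen, hx⟩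
  have hOmMeas : MeasurableSet Om := measurableSet_Ioo.prod measurableSet_Ioo
  have hKeq : Icc ((0 : ℝ), (0 : ℝ)) ((α, β) : ℝ × ℝ) = K := by
    rw [hKdef]; exact Icc_prod_eq _ _
  -- derivative notation
  set DV := fun x => fderivWithin ℝ V K x with hDVdef
  set DT := fun x => fderivWithin ℝ T K x with hDTdef
  set DS := fun x => fderivWithin ℝ Tstar K x with hDSdef
  have hVd : ∀ x ∈ Om, HasFDerivAt V (DV x) x := by
    intro x hx
    have h1 := hKnhds x hx
    have h2 : DifferentiableAt ℝ V x := (hV.differentiableOn one_ne_zero).differentiableAt h1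
    show HasFDerivAt V (fderivWithin ℝ V K x) x
    rw [fderivWithin_of_mem_nhds h1]
    exact h2.hasFDerivAt
  have hTd : ∀ x ∈ Om, HasFDerivAt T (DT x) x := by
    intro x hx
    have h1 := hKnhds x hx
    have h2 : DifferentiableAt ℝ T x := (hTc.differentiableOn one_ne_zero).differentiableAt h1
    show HasFDerivAt T (fderivWithin ℝ T K x) x
    rw [fderivWithin_of_mem_nhds h1]
    exact h2.hasFDerivAt
  have hSd : ∀ x ∈ Om, HasFDerivAt Tstar (DS x) x := by
    intro x hx
    have h1 := hKnhds x hx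
    have h2 : DifferentiableAt ℝ Tstar x := (hSc.differentiableOn one_ne_zero).differentiableAt h1
    show HasFDerivAt Tstar (fderivWithin ℝ Tstar K x) x
    rw [fderivWithin_of_mem_nhds h1]
    exact h2.hasFDerivAt
  have hDVc : ContinuousOn DV K := hV.continuousOn_fderivWithin hud le_rfl
  have hDTc : ContinuousOn DT K := hTc.continuousOn_fderivWithin hud le_rfl
  have hDSc : ContinuousOn DS K := hSc.continuousOn_fderivWithin hud le_rfl
  -- partial derivatives of V
  have hd1 : ∀ x ∈ Om, deriv (fun s => V (s, x.2)) x.1 = DV x (1, 0) :=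
    fun x hx => (hasDerivAt_comp_fst (hVd x hx)).deriv
  have hd2 : ∀ x ∈ Om, deriv (fun s => V (x.1, s)) x.2 = DV x (0, 1) :=
    fun x hx => (hasDerivAt_comp_snd (hVd x hx)).deriv
  -- divergence identities
  have hpdivT : ∀ x ∈ Om, (DT x (1, 0)).1 + (DT x (0, 1)).2 = ρ x := by
    intro x hx
    have h := hTdvg x hx
    unfold pdiv at h
    have e1 : deriv (fun s => (T (s, x.2)).1) x.1 = (DT x (1, 0)).1 := by
      simpa using (hasDerivAt_comp_fst ((hTd x hx).fst)).deriv
    have e2 : deriv (fun s => (T (x.1, s)).2) x.2 = (DT x (0, 1)).2 := by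
      simpa using (hasDerivAt_comp_snd ((hTd x hx).snd)).deriv
    rw [e1, e2] at h
    exact h
  have hpdivS : ∀ x ∈ Om, (DS x (1, 0)).1 + (DS x (0, 1)).2 = ρ x := by
    intro x hx
    have h := hSdvg x hx
    unfold pdiv at h
    have e1 : deriv (fun s => (Tstar (s, x.2)).1) x.1 = (DS x (1, 0)).1 := by
      simpa using (hasDerivAt_comp_fst ((hSd x hx).fst)).deriv
    have e2 : deriv (fun s => (Tstar (x.1, s)).2) x.2 = (DS x (0, 1)).2 := by
      simpa using (hasDerivAt_comp_snd ((hSd x hx).snd)).deriv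
    rw [e1, e2] at h
    exact h
  -- the flow difference and the functions in the divergence theorem
  set f := fun x : ℝ × ℝ => V x * ((T x).1 - (Tstar x).1) with hfdef
  set g := fun x : ℝ × ℝ => V x * ((T x).2 - (Tstar x).2) with hgdef
  set f' := fun x : ℝ × ℝ =>
    V x • ((ContinuousLinearMap.fst ℝ ℝ ℝ).comp (DT x) -
           (ContinuousLinearMap.fst ℝ ℝ ℝ).comp (DS x)) +
    ((T x).1 - (Tstar x).1) • DV x with hf'def
  set g' := fun x : ℝ × ℝ =>
    V x • ((ContinuousLinearMap.snd ℝ ℝ ℝ).comp (DT x) -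
           (ContinuousLinearMap.snd ℝ ℝ ℝ).comp (DS x)) +
    ((T x).2 - (Tstar x).2) • DV x with hg'def
  have hdf : ∀ x ∈ Om, HasFDerivAt f (f' x) x := fun x hx =>
    (hVd x hx).mul (((hTd x hx).fst).sub ((hSd x hx).fst))
  have hdg : ∀ x ∈ Om, HasFDerivAt g (g' x) x := fun x hx =>
    (hVd x hx).mul (((hTd x hx).snd).sub ((hSd x hx).snd))
  -- continuity of various functions on K
  have hVcont : ContinuousOn V K := hV.continuousOn
  have hTcont : ContinuousOn T K := hTc.continuousOn
  have hScont : ContinuousOn Tstar K := hSc.continuousOn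
  have hT1c : ContinuousOn (fun x => (T x).1) K := hTcont.fst
  have hT2c : ContinuousOn (fun x => (T x).2) K := hTcont.snd
  have hS1c : ContinuousOn (fun x => (Tstar x).1) K := hScont.fst
  have hS2c : ContinuousOn (fun x => (Tstar x).2) K := hScont.snd
  have hDV10 : ContinuousOn (fun x => DV x (1, 0)) K := hDVc.clm_apply continuousOn_const
  have hDV01 : ContinuousOn (fun x => DV x (0, 1)) K := hDVc.clm_apply continuousOn_const
  have hDT10 : ContinuousOn (fun x => (DT x (1, 0)).1) K :=
    (hDTc.clm_apply continuousOn_const).fst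
  have hDT01 : ContinuousOn (fun x => (DT x (0, 1)).2) K :=
    (hDTc.clm_apply continuousOn_const).snd
  have hDS10 : ContinuousOn (fun x => (DS x (1, 0)).1) K :=
    (hDSc.clm_apply continuousOn_const).fst
  have hDS01 : ContinuousOn (fun x => (DS x (0, 1)).2) K :=
    (hDSc.clm_apply continuousOn_const).snd
  -- the combined integrand of the divergence theorem
  have hFapp : ∀ x, f' x (1, 0) + g' x (0, 1) =
      V x * ((DT x (1, 0)).1 - (DS x (1, 0)).1) + ((T x).1 - (Tstar x).1) * DV x (1, 0) +
      (V x * ((DT x (0, 1)).2 - (DS x (0, 1)).2) + ((T x).2 - (Tstar x).2) * DV x (0, 1)) := by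
    intro x
    simp [hf'def, hg'def, ContinuousLinearMap.add_apply, ContinuousLinearMap.smul_apply,
      ContinuousLinearMap.sub_apply, ContinuousLinearMap.comp_apply, smul_eq_mul]
  have hFc : ContinuousOn (fun x => f' x (1, 0) + g' x (0, 1)) K := by
    simp only [hFapp]
    exact ((hVcont.mul (hDT10.sub hDS10)).add ((hT1c.sub hS1c).mul hDV10)).add
      ((hVcont.mul (hDT01.sub hDS01)).add ((hT2c.sub hS2c).mul hDV01))
  have hFi : IntegrableOn (fun x => f' x (1, 0) + g' x (0, 1)) K := by
    exact hFc.integrableOn_compact hcomp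
  -- divergence theorem: the integral of the divergence over the rectangle vanishes
  have hdiv0 : ∫ x in Icc ((0 : ℝ), (0 : ℝ)) ((α, β) : ℝ × ℝ),
      (f' x (1, 0) + g' x (0, 1)) = 0 := by
    have hle : ((0 : ℝ), (0 : ℝ)) ≤ ((α, β) : ℝ × ℝ) := ⟨hα.le, hβ.le⟩
    have hbd := integral_divergence_prod_Icc_of_hasFDerivAt_off_countable_of_le
      f g f' g' ((0 : ℝ), (0 : ℝ)) ((α, β) : ℝ × ℝ) hle ∅ countable_empty
      (hKeq ▸ hVcont.mul (hT1c.sub hS1c)) (hKeq ▸ hVcont.mul (hT2c.sub hS2c))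
      (fun x hx => hdf x (by simpa [hOmdef] using hx.1))
      (fun x hx => hdg x (by simpa [hOmdef] using hx.1))
      (hKeq ▸ hFi)
    rw [hbd]
    have hz1 : (∫ x in (0 : ℝ)..α, g (x, β)) = 0 := by
      rw [intervalIntegral.integral_congr (g := fun _ => (0 : ℝ)) ?_]
      · simp
      · intro x hx
        have hxI : x ∈ Icc (0 : ℝ) α := by rwa [uIcc_of_le hα.le] at hx
        have hv : V (x, β) = 0 := hVbd (x, β)
          ⟨⟨hxI, right_mem_Icc.2 hβ.le⟩, fun h => lt_irrefl β h.2.2⟩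
        simp [hgdef, hv]
    have hz2 : (∫ x in (0 : ℝ)..α, g (x, 0)) = 0 := by
      rw [intervalIntegral.integral_congr (g := fun _ => (0 : ℝ)) ?_]
      · simp
      · intro x hx
        have hxI : x ∈ Icc (0 : ℝ) α := by rwa [uIcc_of_le hα.le] at hx
        have hv : V (x, 0) = 0 := hVbd (x, 0)
          ⟨⟨hxI, left_mem_Icc.2 hβ.le⟩, fun h => lt_irrefl (0 : ℝ) h.2.1⟩
        simp [hgdef, hv]
    have hz3 : (∫ y in (0 : ℝ)..β, f (α, y)) = 0 := by
      rw [intervalIntegral.integral_congr (g := fun _ => (0 : ℝ)) ?_]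
      · simp
      · intro y hy
        have hyI : y ∈ Icc (0 : ℝ) β := by rwa [uIcc_of_le hβ.le] at hy
        have hv : V (α, y) = 0 := hVbd (α, y)
          ⟨⟨right_mem_Icc.2 hα.le, hyI⟩, fun h => lt_irrefl α h.1.2⟩
        simp [hfdef, hv]
    have hz4 : (∫ y in (0 : ℝ)..β, f (0, y)) = 0 := by
      rw [intervalIntegral.integral_congr (g := fun _ => (0 : ℝ)) ?_]
      · simp
      · intro y hy
        have hyI : y ∈ Icc (0 : ℝ) β := by rwa [uIcc_of_le hβ.le] at hy
        have hv : V (0, y) = 0 := hVbd (0, y)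
          ⟨⟨left_mem_Icc.2 hα.le, hyI⟩, fun h => lt_irrefl (0 : ℝ) h.1.1⟩
        simp [hfdef, hv]
    show (((∫ x in (0 : ℝ)..α, g (x, β)) - ∫ x in (0 : ℝ)..α, g (x, 0)) +
        ∫ y in (0 : ℝ)..β, f (α, y)) - ∫ y in (0 : ℝ)..β, f (0, y) = 0
    rw [hz1, hz2, hz3, hz4]
    ring
  -- the boundary of the rectangle is null
  have hnull : volume (K \ Om) = 0 := by
    have hsub : K \ Om ⊆ (({0, α} : Set ℝ) ×ˢ (univ : Set ℝ)) ∪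
        ((univ : Set ℝ) ×ˢ ({0, β} : Set ℝ)) := by
      rintro ⟨x, y⟩ ⟨⟨hx, hy⟩, hn⟩
      have hn' : x ∉ Ioo 0 α ∨ y ∉ Ioo 0 β := by
        by_contra hc
        push_neg at hc
        exact hn ⟨hc.1, hc.2⟩
      rcases hn' with h | h
      · left
        refine ⟨?_, mem_univ _⟩
        simp only [mem_Ioo, not_and, not_lt] at h
        simp only [mem_insert_iff, mem_singleton_iff]
        rcases eq_or_lt_of_le hx.1 with h0 | h0
        · exact Or.inl h0.symm
        · exact Or.inr (le_antisymm hx.2 (h h0))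
      · right
        refine ⟨mem_univ _, ?_⟩
        simp only [mem_Ioo, not_and, not_lt] at h
        simp only [mem_insert_iff, mem_singleton_iff]
        rcases eq_or_lt_of_le hy.1 with h0 | h0
        · exact Or.inl h0.symm
        · exact Or.inr (le_antisymm hy.2 (h h0))
    refine measure_mono_null hsub (measure_union_null ?_ ?_)
    · rw [Measure.volume_eq_prod, Measure.prod_prod]
      rw [Set.Finite.measure_zero (Set.toFinite _) volume, zero_mul]
    · rw [Measure.volume_eq_prod, Measure.prod_prod]
      rw [Set.Finite.measure_zero (Set.toFinite ({0, β} : Set ℝ)) volume, mul_zero]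
  have hae : Om =ᵐ[volume] K := by
    rw [MeasureTheory.ae_eq_set]
    constructor
    · rw [diff_eq_empty.2 hOmK]
      exact measure_empty
    · exact hnull
  -- the integral over Om of the divergence integrand vanishes
  have hIntOm : ∫ x in Om, (f' x (1, 0) + g' x (0, 1)) = 0 := by
    rw [setIntegral_congr_set hae, ← hKeq]
    exact hdiv0
  -- identify with G on Om
  set G := fun x : ℝ × ℝ => DV x (1, 0) * ((T x).1 - (Tstar x).1) +
      DV x (0, 1) * ((T x).2 - (Tstar x).2) with hGdef
  have hFG : EqOn (fun x => f' x (1, 0) + g' x (0, 1)) G Om := by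
    intro x hx
    have e1 := hpdivT x hx
    have e2 := hpdivS x hx
    simp only [hFapp, hGdef]
    linear_combination V x * e1 - V x * e2
  have hIG0 : ∫ x in Om, G x = 0 := by
    rw [← setIntegral_congr_fun hOmMeas hFG]
    exact hIntOm
  -- continuity and integrability of the cost integrands
  have hrpC : Continuous (fun t : ℝ => t ^ (bhat + 1)) :=
    continuous_iff_continuousAt.2 fun t =>
      Real.continuousAt_rpow_const t _ (Or.inr (by linarith))
  have hGc : ContinuousOn G K :=
    (hDV10.mul (hT1c.sub hS1c)).add (hDV01.mul (hT2c.sub hS2c))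
  have hAc : ContinuousOn
      (fun x => k1 x * (Tstar x).1 ^ (bhat + 1) + k2 x * (Tstar x).2 ^ (bhat + 1)) K :=
    (hk1cont.mul (hrpC.comp_continuousOn hS1c)).add
      (hk2cont.mul (hrpC.comp_continuousOn hS2c))
  have hBc : ContinuousOn
      (fun x => k1 x * (T x).1 ^ (bhat + 1) + k2 x * (T x).2 ^ (bhat + 1)) K :=
    (hk1cont.mul (hrpC.comp_continuousOn hT1c)).add
      (hk2cont.mul (hrpC.comp_continuousOn hT2c))
  have hAi : IntegrableOn
      (fun x => k1 x * (Tstar x).1 ^ (bhat + 1) + k2 x * (Tstar x).2 ^ (bhat + 1)) Om :=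
    (hAc.integrableOn_compact hcomp).mono_set hOmK
  have hBi : IntegrableOn
      (fun x => k1 x * (T x).1 ^ (bhat + 1) + k2 x * (T x).2 ^ (bhat + 1)) Om :=
    (hBc.integrableOn_compact hcomp).mono_set hOmK
  have hGi : IntegrableOn G Om := (hGc.integrableOn_compact hcomp).mono_set hOmK
  have hBGi : IntegrableOn
      (fun x => k1 x * (T x).1 ^ (bhat + 1) + k2 x * (T x).2 ^ (bhat + 1)
        + (bhat + 1) * G x) Om :=
    hBi.add (hGi.const_mul (bhat + 1))
  -- the pointwise inequality
  have hpt : ∀ x ∈ Om,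
      k1 x * (Tstar x).1 ^ (bhat + 1) + k2 x * (Tstar x).2 ^ (bhat + 1) ≤
      k1 x * (T x).1 ^ (bhat + 1) + k2 x * (T x).2 ^ (bhat + 1) + (bhat + 1) * G x := by
    intro x hx
    have hxK := hOmK hx
    obtain ⟨ha1, ha2⟩ := hSn x hxK
    obtain ⟨ht1, ht2⟩ := hTn x hxK
    have hk1x := hk1pos x hxK
    have hk2x := hk2pos x hxK
    have hw1' := hw1 x hx
    have hw2' := hw2 x hx
    rw [hd1 x hx] at hw1'
    rw [hd2 x hx] at hw2'
    have hc1 := rpow_taylor ha1 ht1 hbhat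
    have hc2 := rpow_taylor ha2 ht2 hbhat
    have key1 : 0 ≤ (k1 x * (Tstar x).1 ^ bhat + DV x (1, 0)) * ((T x).1 - (Tstar x).1) := by
      rcases eq_or_lt_of_le ha1 with h | h
      · rw [← h, sub_zero]
        exact mul_nonneg (by rw [← h] at hw1'; exact hw1'.1) ht1
      · rw [hw1'.2 h]
        simp
    have key2 : 0 ≤ (k2 x * (Tstar x).2 ^ bhat + DV x (0, 1)) * ((T x).2 - (Tstar x).2) := by
      rcases eq_or_lt_of_le ha2 with h | h
      · rw [← h, sub_zero]
        exact mul_nonneg (by rw [← h] at hw2'; exact hw2'.1) ht2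
      · rw [hw2'.2 h]
        simp
    have hp1 : (0 : ℝ) < bhat + 1 := by linarith
    have m1 := mul_le_mul_of_nonneg_left hc1 hk1x.le
    have m2 := mul_le_mul_of_nonneg_left hc2 hk2x.le
    have m3 := mul_nonneg hp1.le key1
    have m4 := mul_nonneg hp1.le key2
    simp only [hGdef]
    nlinarith [m1, m2, m3, m4]
  -- assemble
  calc ∫ x in Om, (k1 x * (Tstar x).1 ^ (bhat + 1) + k2 x * (Tstar x).2 ^ (bhat + 1))
      ≤ ∫ x in Om, (k1 x * (T x).1 ^ (bhat + 1) + k2 x * (T x).2 ^ (bhat + 1)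
          + (bhat + 1) * G x) := setIntegral_mono_on hAi hBGi hOmMeas hpt
    _ = (∫ x in Om, (k1 x * (T x).1 ^ (bhat + 1) + k2 x * (T x).2 ^ (bhat + 1)))
          + ∫ x in Om, (bhat + 1) * G x := integral_add hBi (hGi.const_mul (bhat + 1))
    _ = ∫ x in Om, (k1 x * (T x).1 ^ (bhat + 1) + k2 x * (T x).2 ^ (bhat + 1)) := by
        rw [integral_const_mul, hIG0, mul_zero, add_zero]
end
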